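/- arXiv:1607.06733 — 5 statements merged into one kernel-verified Lean document; each statement's English description precedes it below -/
import Mathlib

section
/- Discrete-time martingale representation. Let 𝓕_i ⊆ 𝓕_{i+1} be sub-σ-algebras of a probability space, h > 0, and let H_{i+1} be an ℝ^d-valued square-integrable random variable, independent of 𝓕_i, with 𝔼_i[H_{i+1}] = 0 and 𝔼_i[(H_{i+1}h)(H_{i+1}h)^*] = Λ h I_d for some 1/2 ≤ Λ ≤ 1 (so that 𝔼_i[|H_{i+1}h|²] = Λ d h). Let 𝒴_{i+1} be an 𝓕_{i+1}-measurable ℝⁿ-valued random variable and 𝒵_i an 𝓕_i-measurable ℝ^{n×d}-valued random variable such that 𝒴_{i+1} + f^h(t_i,𝒴_{i+1},𝒵_i)h ∈ L², and define 𝒴_i := 𝔼_i[𝒴_{i+1} + f^h(t_i,𝒴_{i+1},𝒵_i)h] and ΔM_{i+1} := 𝒴_{i+1} + f^h(t_i,𝒴_{i+1},𝒵_i)h − 𝒴_i. Then: (i) 𝔼_i[ΔM_{i+1}] = 0; (ii) there exists a unique pair (ζ_i, ΔN_{i+1}) with ζ_i an 𝓕_i-measurable ℝ^{n×d}-valued random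 variable and ΔN_{i+1} satisfying 𝔼_i[ΔN_{i+1}] = 0 and 𝔼_i[ΔN_{i+1}(H_{i+1}h)^*] = 0, such that ΔM_{i+1} = ζ_i Λ^{-1} H_{i+1} h + ΔN_{i+1}; (iii) ζ_i = 𝔼_i[(𝒴_{i+1} + f^h(t_i,𝒴_{i+1},𝒵_i)h) H_{i+1}^*]. -/
open MeasureTheory ProbabilityTheory
open scoped InnerProductSpace

/-- Matrix–vector product, matrices being encoded as `EuclideanSpace ℝ (Fin n × Fin d)`
(Frobenius norm). -/
noncomputable def mvecE {n d : ℕ} (M : EuclideanSpace ℝ (Fin n × Fin d))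
    (v : EuclideanSpace ℝ (Fin d)) : EuclideanSpace ℝ (Fin n) :=
  (WithLp.equiv 2 _).symm fun i => ∑ j, M (i, j) * v j

/-- Outer product `y v^*`, encoded as an element of `EuclideanSpace ℝ (Fin n × Fin d)`. -/
noncomputable def outerE {n d : ℕ} (y : EuclideanSpace ℝ (Fin n))
    (v : EuclideanSpace ℝ (Fin d)) : EuclideanSpace ℝ (Fin n × Fin d) :=
  (WithLp.equiv 2 _).symm fun p => y p.1 * v p.2

private lemma mulL2 {α : Type*} {mα : MeasurableSpace α} {μ : Measure α}
    {f g : α → ℝ} (hf : MemLp f 2 μ) (hg : MemLp g 2 μ) :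
    Integrable (fun ω => f ω * g ω) μ := by
  rw [← memLp_one_iff_integrable]
  have hsm := hf.smul hg (r := 1) (hpqr := ⟨by simp [ENNReal.inv_two_add_inv_two]⟩)
  have : (fun ω => f ω * g ω) = g • f := by funext ω; simp [mul_comm]
  rwa [this]

private lemma condexp_clm {α E F : Type*}
    [NormedAddCommGroup E] [NormedSpace ℝ E] [CompleteSpace E]
    [NormedAddCommGroup F] [NormedSpace ℝ F] [CompleteSpace F]
    {m m0 : MeasurableSpace α} (hm : m ≤ m0) {μ : Measure α} [IsFiniteMeasure μ]
    (L : E →L[ℝ] F) {f : α → E} (hf : Integrable f μ) :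
    (fun ω => L ((μ[f|m]) ω)) =ᵐ[μ] μ[fun ω => L (f ω)|m] := by
  haveI : SigmaFinite (μ.trim hm) := by infer_instance
  refine ae_eq_condExp_of_forall_setIntegral_eq hm (L.integrable_comp hf)
    (fun s _ _ => (L.integrable_comp integrable_condExp).integrableOn)
    (fun s hs hμs => ?_)
    (StronglyMeasurable.aestronglyMeasurable
      (L.continuous.comp_stronglyMeasurable stronglyMeasurable_condExp))
  rw [L.integral_comp_comm integrable_condExp.integrableOn,
      L.integral_comp_comm hf.integrableOn, setIntegral_condExp hm hf hs]

private lemma euclid_ae_eq {α ι : Type*} [Fintype ι] {mα : MeasurableSpace α} {μ : Measure α}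
    {f g : α → EuclideanSpace ℝ ι}
    (h : ∀ i, (fun ω => f ω i) =ᵐ[μ] fun ω => g ω i) : f =ᵐ[μ] g := by
  filter_upwards [ae_all_iff.2 h] with ω hω
  exact PiLp.ext hω

private lemma euclid_integrable {α ι : Type*} [Fintype ι] {mα : MeasurableSpace α}
    {μ : Measure α} {f : α → EuclideanSpace ℝ ι}
    (h : ∀ i, Integrable (fun ω => f ω i) μ) : Integrable f μ := by
  have hf : f = fun ω => ∑ i, (f ω i) • (EuclideanSpace.basisFun ι ℝ) i := by
    funext ω
    exact ((EuclideanSpace.basisFun ι ℝ).sum_repr (f ω)).symm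
  rw [hf]
  exact integrable_finset_sum _ fun i _ => (h i).smul_const _

private lemma proj_sm {α ι : Type*} [Fintype ι] {m : MeasurableSpace α}
    {f : α → EuclideanSpace ℝ ι} (hf : StronglyMeasurable[m] f) (i : ι) :
    StronglyMeasurable[m] fun ω => f ω i :=
  (EuclideanSpace.proj i : EuclideanSpace ℝ ι →L[ℝ] ℝ).continuous.comp_stronglyMeasurable hf

private lemma proj_int {α ι : Type*} [Fintype ι] {m : MeasurableSpace α} {μ : Measure α}
    {f : α → EuclideanSpace ℝ ι} (hf : Integrable f μ) (i : ι) :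
    Integrable (fun ω => f ω i) μ :=
  (EuclideanSpace.proj i : EuclideanSpace ℝ ι →L[ℝ] ℝ).integrable_comp hf

private lemma condexp_sum_ae {α κ : Type*} [Fintype κ] {m m0 : MeasurableSpace α}
    {μ : Measure α} {F : κ → α → ℝ} {g : κ → α → ℝ} (hFint : ∀ l, Integrable (F l) μ)
    (h : ∀ l, μ[F l|m] =ᵐ[μ] g l) :
    μ[fun ω => ∑ l, F l ω|m] =ᵐ[μ] fun ω => ∑ l, g l ω := by
  have h0 : (fun ω => ∑ l, F l ω) = ∑ l, F l := by funext ω; simp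
  rw [h0]
  refine (condExp_finsetSum (fun l _ => hFint l) m).trans ?_
  filter_upwards [ae_all_iff.2 h] with ω hω
  simpa using Finset.sum_congr rfl fun l _ => hω l

/-- Discrete-time martingale representation: the increment
`ΔM = 𝒴_{i+1} + f^h(t_i,𝒴_{i+1},𝒵_i)h − 𝒴_i` is a martingale increment, and it admits a
unique decomposition `ΔM = ζ Λ^{-1} H h + ΔN` with `ζ` 𝓕ᵢ-measurable and `ΔN` a martingale
increment orthogonal to `Hh`; moreover `ζ = 𝔼ᵢ[(𝒴_{i+1} + f^h(t_i,𝒴_{i+1},𝒵_i)h) H^*]`. -/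
theorem discrete_martingale_representation
    {n d : ℕ} (hd : 0 < d) {Ω : Type} {mΩ : MeasurableSpace Ω}
    (μ : Measure Ω) [IsProbabilityMeasure μ]
    (m0 m1 : MeasurableSpace Ω) (hm01 : m0 ≤ m1) (hm1 : m1 ≤ mΩ)
    (h : ℝ) (hh : 0 < h) (Λ : ℝ) (hΛ1 : 1 / 2 ≤ Λ) (hΛ2 : Λ ≤ 1)
    (H : Ω → EuclideanSpace ℝ (Fin d)) (hHL2 : MemLp H 2 μ)
    (hHindep : Indep (MeasurableSpace.comap H inferInstance) m0 μ)
    (hHmean : (μ[H | m0]) =ᵐ[μ] 0)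
    (hHcov : ∀ j k : Fin d,
      (μ[(fun ω => (H ω j * h) * (H ω k * h)) | m0]) =ᵐ[μ]
        fun _ => Λ * h * (if j = k then 1 else 0))
    (T ti : ℝ) (hti : ti ∈ Set.Icc (0:ℝ) T)
    (fh : ℝ → EuclideanSpace ℝ (Fin n) → EuclideanSpace ℝ (Fin n × Fin d) →
      EuclideanSpace ℝ (Fin n))
    (Y1 : Ω → EuclideanSpace ℝ (Fin n)) (hY1 : StronglyMeasurable[m1] Y1)
    (Z : Ω → EuclideanSpace ℝ (Fin n × Fin d)) (hZ : StronglyMeasurable[m0] Z)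
    (hL2 : MemLp (fun ω => Y1 ω + h • fh ti (Y1 ω) (Z ω)) 2 μ)
    (Yi ΔM : Ω → EuclideanSpace ℝ (Fin n))
    (hYi : Yi = μ[(fun ω => Y1 ω + h • fh ti (Y1 ω) (Z ω)) | m0])
    (hΔM : ∀ ω, ΔM ω = Y1 ω + h • fh ti (Y1 ω) (Z ω) - Yi ω) :
    -- (i) ΔM is a martingale increment
    ((μ[ΔM | m0]) =ᵐ[μ] 0) ∧
    -- (ii) and (iii): existence, formula for ζ, and uniqueness of the decomposition
    (∃ (ζ : Ω → EuclideanSpace ℝ (Fin n × Fin d)) (ΔN : Ω → EuclideanSpace ℝ (Fin n)),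
      (StronglyMeasurable[m0] ζ ∧ Integrable ζ μ ∧ Integrable ΔN μ ∧
        (μ[ΔN | m0]) =ᵐ[μ] 0 ∧
        (∀ (j : Fin n) (k : Fin d), (μ[(fun ω => ΔN ω j * (H ω k * h)) | m0]) =ᵐ[μ] fun _ => (0:ℝ)) ∧
        (∀ᵐ ω ∂μ, ΔM ω = (Λ⁻¹ * h) • mvecE (ζ ω) (H ω) + ΔN ω)) ∧
      (ζ =ᵐ[μ]
        μ[(fun ω => outerE (Y1 ω + h • fh ti (Y1 ω) (Z ω)) (H ω)) | m0]) ∧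
      (∀ (ζ' : Ω → EuclideanSpace ℝ (Fin n × Fin d)) (ΔN' : Ω → EuclideanSpace ℝ (Fin n)),
        StronglyMeasurable[m0] ζ' → Integrable ζ' μ → Integrable ΔN' μ →
        (μ[ΔN' | m0]) =ᵐ[μ] 0 →
        (∀ (j : Fin n) (k : Fin d),
          (μ[(fun ω => ΔN' ω j * (H ω k * h)) | m0]) =ᵐ[μ] fun _ => (0:ℝ)) →
        (∀ᵐ ω ∂μ, ΔM ω = (Λ⁻¹ * h) • mvecE (ζ' ω) (H ω) + ΔN' ω) →
        ζ' =ᵐ[μ] ζ ∧ ΔN' =ᵐ[μ] ΔN)) := by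
    classical
  have hm0 : m0 ≤ mΩ := hm01.trans hm1
  have hΛ0 : Λ ≠ 0 := by linarith
  set G : Ω → EuclideanSpace ℝ (Fin n) := fun ω => Y1 ω + h • fh ti (Y1 ω) (Z ω) with hGdef
  have hGint : Integrable G μ := hL2.integrable one_le_two
  have hHint : Integrable H μ := hHL2.integrable one_le_two
  have hGj : ∀ j, MemLp (fun ω => G ω j) 2 μ := fun j =>
    (EuclideanSpace.proj j : EuclideanSpace ℝ (Fin n) →L[ℝ] ℝ).comp_memLp' hL2
  have hHk : ∀ k, MemLp (fun ω => H ω k) 2 μ := fun k =>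
    (EuclideanSpace.proj k : EuclideanSpace ℝ (Fin d) →L[ℝ] ℝ).comp_memLp' hHL2
  have hHkint : ∀ k, Integrable (fun ω => H ω k) μ := fun k => (hHk k).integrable one_le_two
  -- measurability of H w.r.t. comap
  have hHm : Measurable[MeasurableSpace.comap H inferInstance] H :=
    measurable_iff_comap_le.mpr le_rfl
  have hφk : ∀ k : Fin d, Measurable fun v : EuclideanSpace ℝ (Fin d) => v k := fun k =>
    (EuclideanSpace.proj k : EuclideanSpace ℝ (Fin d) →L[ℝ] ℝ).measurable
  have hHlm : ∀ l : Fin d,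
      Measurable[MeasurableSpace.comap H inferInstance] fun ω => H ω l := fun l =>
    (hφk l).comp hHm
  -- basic facts about Yi and ΔM
  have hYim : StronglyMeasurable[m0] Yi := hYi ▸ stronglyMeasurable_condExp
  have hYiint : Integrable Yi μ := hYi ▸ integrable_condExp
  have hΔMfun : ΔM = G - Yi := by
    funext ω
    rw [hΔM ω]
    show _ = G ω - Yi ω
    rw [hGdef]
  have hΔMint : Integrable ΔM μ := hΔMfun ▸ hGint.sub hYiint
  -- (i)
  have hi : μ[ΔM|m0] =ᵐ[μ] 0 := by
    rw [hΔMfun]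
    refine (condExp_sub hGint hYiint m0).trans ?_
    have h1 : μ[Yi|m0] = Yi := condExp_of_stronglyMeasurable hm0 hYim hYiint
    rw [h1, hYi]
    filter_upwards with ω
    simp
  -- the pull-out property
  have pullout : ∀ ξ : Ω → ℝ, StronglyMeasurable[m0] ξ → Integrable ξ μ →
      ∀ ψ : Ω → ℝ, Measurable[MeasurableSpace.comap H inferInstance] ψ → Integrable ψ μ →
      Integrable (fun ω => ξ ω * ψ ω) μ ∧
      μ[fun ω => ξ ω * ψ ω|m0] =ᵐ[μ] fun ω => ξ ω * (μ[ψ|m0]) ω := by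
    intro ξ hξm hξint ψ hψm hψint
    have hindep : IndepFun ξ ψ μ :=
      indep_of_indep_of_le_right
        (indep_of_indep_of_le_left hHindep.symm hξm.measurable.comap_le) hψm.comap_le
    have hmul : Integrable (fun ω => ξ ω * ψ ω) μ := hindep.integrable_mul hξint hψint
    exact ⟨hmul, condExp_mul_of_stronglyMeasurable_left hξm hmul hψint⟩
  -- conditional mean of components of H
  have hHmean' : ∀ k, μ[fun ω => H ω k|m0] =ᵐ[μ] 0 := by
    intro k
    refine (condexp_clm hm0 (EuclideanSpace.proj k) hHint).symm.trans ?_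
    filter_upwards [hHmean] with ω hω
    simp only [hω]
    rfl
  -- rescaled covariance
  have hHcov' : ∀ l k : Fin d, μ[fun ω => H ω l * (H ω k * h)|m0] =ᵐ[μ]
      fun _ => Λ * (if l = k then 1 else 0) := by
    intro l k
    have heq : (fun ω => H ω l * (H ω k * h))
        = h⁻¹ • fun ω => (H ω l * h) * (H ω k * h) := by
      funext ω
      simp only [Pi.smul_apply, smul_eq_mul]
      field_simp
    rw [heq]
    refine (condExp_smul h⁻¹ _ m0).trans ?_
    filter_upwards [hHcov l k] with ω hω
    simp only [Pi.smul_apply, smul_eq_mul, hω]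
    field_simp
  -- ζ
  have houter_int : Integrable (fun ω => outerE (G ω) (H ω)) μ := by
    apply euclid_integrable
    rintro ⟨j, k⟩
    exact mulL2 (hGj j) (hHk k)
  set ζ : Ω → EuclideanSpace ℝ (Fin n × Fin d) := μ[fun ω => outerE (G ω) (H ω)|m0] with hζdef
  have hζm : StronglyMeasurable[m0] ζ := stronglyMeasurable_condExp
  have hζint : Integrable ζ μ := integrable_condExp
  have hζcomp : ∀ (j : Fin n) (k : Fin d),
      (fun ω => ζ ω (j, k)) =ᵐ[μ] μ[fun ω => G ω j * H ω k|m0] :=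
    fun j k => condexp_clm hm0 (EuclideanSpace.proj (j, k)) houter_int
  -- integrability of products with H components
  have hmvec_term_int : ∀ (ξ : Ω → EuclideanSpace ℝ (Fin n × Fin d)),
      StronglyMeasurable[m0] ξ → Integrable ξ μ → ∀ (j : Fin n) (l : Fin d),
      Integrable (fun ω => ξ ω (j, l) * H ω l) μ := fun ξ hξm hξint j l =>
    (pullout _ (proj_sm hξm (j, l)) (proj_int hξint (j, l)) _ (hHlm l) (hHkint l)).1
  have hmvec_int : ∀ (ξ : Ω → EuclideanSpace ℝ (Fin n × Fin d)),
      StronglyMeasurable[m0] ξ → Integrable ξ μ →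
      Integrable (fun ω => mvecE (ξ ω) (H ω)) μ := by
    intro ξ hξm hξint
    apply euclid_integrable
    intro j
    exact integrable_finset_sum Finset.univ fun l _ => hmvec_term_int ξ hξm hξint j l
  -- key computation
  have key : ∀ (ξ : Ω → EuclideanSpace ℝ (Fin n × Fin d)),
      StronglyMeasurable[m0] ξ → Integrable ξ μ → ∀ (j : Fin n) (k : Fin d),
      Integrable (fun ω => (Λ⁻¹ * h) * mvecE (ξ ω) (H ω) j * (H ω k * h)) μ ∧
      μ[fun ω => (Λ⁻¹ * h) * mvecE (ξ ω) (H ω) j * (H ω k * h)|m0] =ᵐ[μ]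
        fun ω => h * ξ ω (j, k) := by
    intro ξ hξm hξint j k
    have hfun : (fun ω => (Λ⁻¹ * h) * mvecE (ξ ω) (H ω) j * (H ω k * h))
        = fun ω => ∑ l, (Λ⁻¹ * h) * (ξ ω (j, l) * (H ω l * (H ω k * h))) := by
      funext ω
      show (Λ⁻¹ * h) * (∑ l, ξ ω (j, l) * H ω l) * (H ω k * h) = _
      rw [Finset.mul_sum, Finset.sum_mul]
      exact Finset.sum_congr rfl fun l _ => by ring
    have hint : ∀ l : Fin d,
        Integrable (fun ω => (Λ⁻¹ * h) * (ξ ω (j, l) * (H ω l * (H ω k * h)))) μ := by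
      intro l
      have hφint : Integrable (fun ω => H ω l * (H ω k * h)) μ := by
        have he : (fun ω => H ω l * (H ω k * h)) = fun ω => h * (H ω l * H ω k) := by
          funext ω; ring
        rw [he]
        exact (mulL2 (hHk l) (hHk k)).const_mul h
      exact ((pullout _ (proj_sm hξm (j, l)) (proj_int hξint (j, l)) _
        ((hHlm l).mul ((hHlm k).mul_const h)) hφint).1).const_mul _
    have hl : ∀ l : Fin d,
        μ[fun ω => (Λ⁻¹ * h) * (ξ ω (j, l) * (H ω l * (H ω k * h)))|m0] =ᵐ[μ]
        fun ω => (Λ⁻¹ * h) * (ξ ω (j, l) * (Λ * (if l = k then 1 else 0))) := by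
      intro l
      have hφint : Integrable (fun ω => H ω l * (H ω k * h)) μ := by
        have he : (fun ω => H ω l * (H ω k * h)) = fun ω => h * (H ω l * H ω k) := by
          funext ω; ring
        rw [he]
        exact (mulL2 (hHk l) (hHk k)).const_mul h
      obtain ⟨hint2, hpull⟩ := pullout _ (proj_sm hξm (j, l)) (proj_int hξint (j, l))
        (fun ω => H ω l * (H ω k * h)) ((hHlm l).mul ((hHlm k).mul_const h)) hφint
      refine ((condExp_smul (Λ⁻¹ * h)
        (fun ω => ξ ω (j, l) * (H ω l * (H ω k * h))) (m := m0)).trans ?_)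
      filter_upwards [hpull, hHcov' l k] with ω h1 h2
      simp only [Pi.smul_apply, smul_eq_mul]
      rw [h1, h2]
    constructor
    · rw [hfun]; exact integrable_finset_sum Finset.univ fun l _ => hint l
    · rw [hfun]
      refine (condexp_sum_ae hint hl).trans ?_
      filter_upwards with ω
      simp only [mul_ite, mul_one, mul_zero, Finset.sum_ite_eq', Finset.mem_univ, if_true]
      field_simp
  -- ΔN
  set ΔN : Ω → EuclideanSpace ℝ (Fin n) :=
    fun ω => ΔM ω - (Λ⁻¹ * h) • mvecE (ζ ω) (H ω) with hΔNdef
  have hmvecζint : Integrable (fun ω => mvecE (ζ ω) (H ω)) μ := hmvec_int ζ hζm hζint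
  have hΔNint : Integrable ΔN μ := hΔMint.sub (hmvecζint.smul (Λ⁻¹ * h))
  -- conditional mean of ΔN
  have hmvec_mean : ∀ j : Fin n,
      μ[fun ω => mvecE (ζ ω) (H ω) j|m0] =ᵐ[μ] fun _ => (0 : ℝ) := by
    intro j
    have hl : ∀ l : Fin d, μ[fun ω => ζ ω (j, l) * H ω l|m0] =ᵐ[μ] fun _ => (0 : ℝ) := by
      intro l
      refine ((pullout _ (proj_sm hζm (j, l)) (proj_int hζint (j, l)) _
        (hHlm l) (hHkint l)).2).trans ?_
      filter_upwards [hHmean' l] with ω hω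
      rw [hω]
      simp
    refine ((condexp_sum_ae (fun l => hmvec_term_int ζ hζm hζint j l) hl).trans ?_)
    filter_upwards with ω
    simp
  have hNmean : μ[ΔN|m0] =ᵐ[μ] 0 := by
    have hc : μ[fun ω => mvecE (ζ ω) (H ω)|m0] =ᵐ[μ] 0 := by
      apply euclid_ae_eq
      intro j
      refine (condexp_clm hm0 (EuclideanSpace.proj j) hmvecζint).trans ?_
      exact hmvec_mean j
    have h1 : μ[ΔN|m0] =ᵐ[μ]
        μ[fun ω => ΔM ω|m0] - μ[(Λ⁻¹ * h) • fun ω => mvecE (ζ ω) (H ω)|m0] :=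
      condExp_sub hΔMint (hmvecζint.smul (Λ⁻¹ * h)) m0
    refine h1.trans ?_
    filter_upwards [hi, hc,
      condExp_smul (Λ⁻¹ * h) (fun ω => mvecE (ζ ω) (H ω)) (m := m0)] with ω e1 e2 e3
    simp only [Pi.sub_apply, e3, Pi.smul_apply]
    rw [show (μ[fun ω => ΔM ω|m0]) ω = (μ[ΔM|m0]) ω from rfl, e1, e2]
    simp
  -- orthogonality of ΔN
  have hGH : ∀ (j : Fin n) (k : Fin d),
      Integrable (fun ω => G ω j * (H ω k * h)) μ ∧
      μ[fun ω => G ω j * (H ω k * h)|m0] =ᵐ[μ]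
        fun ω => h * (μ[fun ω' => G ω' j * H ω' k|m0]) ω := by
    intro j k
    have he : (fun ω => G ω j * (H ω k * h)) = h • fun ω => G ω j * H ω k := by
      funext ω
      simp only [Pi.smul_apply, smul_eq_mul]
      ring
    constructor
    · rw [he]; exact (mulL2 (hGj j) (hHk k)).smul h
    · rw [he]
      refine (condExp_smul h (fun ω => G ω j * H ω k) (m := m0)).trans ?_
      filter_upwards with ω
      simp
  have hYiH : ∀ (j : Fin n) (k : Fin d),
      Integrable (fun ω => Yi ω j * (H ω k * h)) μ ∧
      μ[fun ω => Yi ω j * (H ω k * h)|m0] =ᵐ[μ] fun _ => (0 : ℝ) := by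
    intro j k
    obtain ⟨hint1, hpull⟩ := pullout _ (proj_sm hYim j) (proj_int hYiint j)
      (fun ω => H ω k * h) ((hHlm k).mul_const h) ((hHkint k).mul_const h)
    refine ⟨hint1, hpull.trans ?_⟩
    have hc : μ[fun ω => H ω k * h|m0] =ᵐ[μ] fun _ => (0 : ℝ) := by
      have he : (fun ω => H ω k * h) = h • fun ω => H ω k := by
        funext ω; simp only [Pi.smul_apply, smul_eq_mul]; ring
      rw [he]
      refine (condExp_smul h (fun ω => H ω k) (m := m0)).trans ?_
      filter_upwards [hHmean' k] with ω hω
      simp only [Pi.smul_apply, smul_eq_mul, hω]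
      simp
    filter_upwards [hc] with ω hω
    rw [hω]
    simp
  have hΔMH_int : ∀ (j : Fin n) (k : Fin d),
      Integrable (fun ω => ΔM ω j * (H ω k * h)) μ := by
    intro j k
    have he : (fun ω => ΔM ω j * (H ω k * h))
        = fun ω => G ω j * (H ω k * h) - Yi ω j * (H ω k * h) := by
      funext ω
      rw [hΔMfun]
      show (G ω j - Yi ω j) * (H ω k * h) = _
      ring
    rw [he]
    exact (hGH j k).1.sub (hYiH j k).1
  have hNorth : ∀ (j : Fin n) (k : Fin d),
      μ[fun ω => ΔN ω j * (H ω k * h)|m0] =ᵐ[μ] fun _ => (0 : ℝ) := by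
    intro j k
    have hsplit : (fun ω => ΔN ω j * (H ω k * h)) = fun ω =>
        (G ω j * (H ω k * h) - Yi ω j * (H ω k * h))
        - ((Λ⁻¹ * h) * mvecE (ζ ω) (H ω) j * (H ω k * h)) := by
      funext ω
      show (ΔM ω j - (Λ⁻¹ * h) * mvecE (ζ ω) (H ω) j) * (H ω k * h) = _
      rw [hΔMfun]
      show ((G ω j - Yi ω j) - (Λ⁻¹ * h) * mvecE (ζ ω) (H ω) j) * (H ω k * h) = _
      ring
    rw [hsplit]
    refine ((condExp_sub ((hGH j k).1.sub (hYiH j k).1) (key ζ hζm hζint j k).1 m0).trans ?_)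
    have e1 := condExp_sub (m := m0) (hGH j k).1 (hYiH j k).1
    filter_upwards [e1, (hGH j k).2, (hYiH j k).2, (key ζ hζm hζint j k).2, hζcomp j k]
      with ω a1 a2 a3 a4 a5
    simp only [Pi.sub_apply]
    rw [a1]
    simp only [Pi.sub_apply]
    rw [a2, a3, a4, a5]
    ring
  -- decomposition
  have hdecompae : ∀ᵐ ω ∂μ, ΔM ω = (Λ⁻¹ * h) • mvecE (ζ ω) (H ω) + ΔN ω := by
    filter_upwards with ω
    rw [hΔNdef]
    simp
  refine ⟨hi, ζ, ΔN, ⟨hζm, hζint, hΔNint, hNmean, hNorth, hdecompae⟩, ?_, ?_⟩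
  · rw [hζdef]
  · -- uniqueness
    intro ζ' ΔN' hζ'm hζ'int hΔN'int hΔN'mean hΔN'orth hdecomp'
    have hζcomp_eq : ∀ (ξ : Ω → EuclideanSpace ℝ (Fin n × Fin d))
        (hξm : StronglyMeasurable[m0] ξ) (hξint : Integrable ξ μ)
        (ΔNx : Ω → EuclideanSpace ℝ (Fin n)) (hNxint : Integrable ΔNx μ)
        (hNxorth : ∀ (j : Fin n) (k : Fin d),
          (μ[(fun ω => ΔNx ω j * (H ω k * h)) | m0]) =ᵐ[μ] fun _ => (0:ℝ))
        (hdec : ∀ᵐ ω ∂μ, ΔM ω = (Λ⁻¹ * h) • mvecE (ξ ω) (H ω) + ΔNx ω)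
        (j : Fin n) (k : Fin d),
        μ[fun ω => ΔM ω j * (H ω k * h)|m0] =ᵐ[μ] fun ω => h * ξ ω (j, k) := by
      intro ξ hξm hξint ΔNx hNxint hNxorth hdec j k
      have hCint := (key ξ hξm hξint j k).1
      have hae : (fun ω => ΔM ω j * (H ω k * h)) =ᵐ[μ] fun ω =>
          (Λ⁻¹ * h) * mvecE (ξ ω) (H ω) j * (H ω k * h) + ΔNx ω j * (H ω k * h) := by
        filter_upwards [hdec] with ω hω
        rw [hω]
        show ((Λ⁻¹ * h) • mvecE (ξ ω) (H ω) + ΔNx ω) j * (H ω k * h) = _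
        show ((Λ⁻¹ * h) * mvecE (ξ ω) (H ω) j + ΔNx ω j) * (H ω k * h) = _
        ring
      have hDint : Integrable (fun ω => ΔNx ω j * (H ω k * h)) μ := by
        refine ((hΔMH_int j k).sub hCint).congr ?_
        filter_upwards [hae] with ω hω
        simp only [Pi.sub_apply]
        rw [hω]
        ring
      refine ((condExp_congr_ae hae).trans ?_)
      refine ((condExp_add hCint hDint m0).trans ?_)
      filter_upwards [(key ξ hξm hξint j k).2, hNxorth j k] with ω a1 a2
      simp only [Pi.add_apply]
      rw [a1, a2]
      ring
    have hζeq : ζ' =ᵐ[μ] ζ := by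
      apply euclid_ae_eq
      rintro ⟨j, k⟩
      have e1 := hζcomp_eq ζ' hζ'm hζ'int ΔN' hΔN'int hΔN'orth hdecomp' j k
      have e2 := hζcomp_eq ζ hζm hζint ΔN hΔNint hNorth hdecompae j k
      filter_upwards [e1.symm.trans e2] with ω hω
      have := mul_left_cancel₀ hh.ne' hω
      exact this
    refine ⟨hζeq, ?_⟩
    filter_upwards [hdecomp', hζeq] with ω h1 h2
    rw [hΔNdef]
    show ΔN' ω = ΔM ω - (Λ⁻¹ * h) • mvecE (ζ ω) (H ω)
    rw [h1, h2]
    abel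
end

section
/- Fundamental Lemma. Fix constants c₀, C₀ ≥ 0, μ > 0, d ∈ ℕ*, T > 0. There exists a constant C ≥ 0 (depending only on c₀, C₀, μ, d, T) such that the following holds for every N ≥ 1 with h := T/N. Let (Y_{t_i})_{i=0..N}, (Y_i)_{i=0..N}, (Ŷ_i)_{i=0..N−1} be ℝⁿ-valued square-integrable random variables with Y_{t_N} = ξ and Y_N = ξ^N, and let (Z̄_{t_i})_{i=0..N−1}, (Z_i)_{i=0..N−1}, (Ẑ_i)_{i=0..N−1} be ℝ^{n×d}-valued square-integrable random variables. Set τ_i(Y) := 𝔼[|Y_{t_i} − Ŷ_i|²], τ_i(Z) := 𝔼[|Z̄_{t_i} − Ẑ_i|²]h, and ERR_N² := sup_{i=0..N} 𝔼[|Y_{t_i} − Y_i|²] + 𝔼[Σ_{i=0}^{N−1}|Z̄_{t_i} − Z_i|² h]. Assume the almost-stability inequality: for all i ∈ {0,…,N−1}, 𝔼[|Ŷ_i − Y_i|²] + (1/4)𝔼[|Ẑ_i − Z_i|²] d h ≤ (1 + c₀h)𝔼[|Y_{t_{i+1}} − Y_{i+1}|²] + C₀ h^{μ+1}. Then ERR_N²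 ≤ C 𝔼[|ξ − ξ^N|²] + C Σ_{i=0}^{N−1}(τ_i(Y)/h + τ_i(Z)) + C h^μ. -/
open MeasureTheory


lemma sqInt {Ω E : Type*} [MeasurableSpace Ω] {P : Measure Ω} [NormedAddCommGroup E] {f : Ω → E}
    (hf : MemLp f 2 P) : Integrable (fun ω => ‖f ω‖^2) P := by
  have h := hf.integrable_norm_rpow (by norm_num) (by norm_num)
  simpa [ENNReal.toReal_ofNat, Real.rpow_natCast] using h

lemma young_pt {E : Type*} [NormedAddCommGroup E] (a b c : E) {γ : ℝ} (hγ : 0 < γ) :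
    ‖a - c‖^2 ≤ (1+γ)*‖b - c‖^2 + ((1+γ)/γ)*‖a - b‖^2 := by
  have htri : ‖a - c‖ ≤ ‖a - b‖ + ‖b - c‖ := by
    have := dist_triangle a b c
    simpa [dist_eq_norm] using this
  set x := ‖a - b‖; set y := ‖b - c‖; set z := ‖a - c‖
  have hz2 : z^2 ≤ (x+y)^2 := by
    have hx : 0 ≤ x + y := by positivity
    nlinarith [norm_nonneg (a - c)]
  have key : γ*z^2 ≤ γ*(1+γ)*y^2 + (1+γ)*x^2 := by
    nlinarith [mul_le_mul_of_nonneg_left hz2 hγ.le, sq_nonneg (x - γ*y)]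
  have hγ' : γ ≠ 0 := hγ.ne'
  calc z^2 = (γ*z^2)/γ := by field_simp
    _ ≤ (γ*(1+γ)*y^2 + (1+γ)*x^2)/γ := by
        exact (div_le_div_iff_of_pos_right hγ).mpr key
    _ = (1+γ)*y^2 + ((1+γ)/γ)*x^2 := by field_simp

lemma two_pt {E : Type*} [NormedAddCommGroup E] (a b c : E) :
    ‖a - c‖^2 ≤ 2*‖b - c‖^2 + 2*‖a - b‖^2 := by
  have htri : ‖a - c‖ ≤ ‖a - b‖ + ‖b - c‖ := by
    have := dist_triangle a b c
    simpa [dist_eq_norm] using this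
  nlinarith [norm_nonneg (a - c), norm_nonneg (a - b), norm_nonneg (b - c),
    sq_nonneg (‖a - b‖ - ‖b - c‖)]


noncomputable def myC (c0 C0 T : ℝ) : ℝ :=
  (1 + 8*(c0+1)*T) * Real.exp ((1+c0+c0*T)*T) * (1 + (1+T)*(1 + C0*T)) + 8 + 8*C0*T + 2

lemma aux_step {c0 C0 T h hm E E' Y U ZD : ℝ} (hc0 : 0 ≤ c0) (hC0 : 0 ≤ C0)
    (hh0 : 0 < h) (hhT : h ≤ T) (hE' : 0 ≤ E') (hU : 0 ≤ U) (hm0 : 0 < hm) (hZD : 0 ≤ ZD)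
    (hy : E ≤ (1+h)*Y + (1+h)*U)
    (hs : Y + (1/4)*ZD ≤ (1+c0*h)*E' + C0*(hm*h)) :
    E ≤ (1 + (1+c0+c0*T)*h)*E' + ((1+T)*C0*(hm*h) + (1+T)*U) := by
  have hs' := mul_le_mul_of_nonneg_left hs (by positivity : (0:ℝ) ≤ 1 + h)
  nlinarith [mul_nonneg (mul_nonneg (mul_nonneg hc0 hh0.le) (by linarith : 0 ≤ T - h)) hE',
    mul_nonneg (mul_nonneg hC0 (mul_nonneg hm0.le hh0.le)) (by linarith : 0 ≤ T - h),
    mul_nonneg hU (by linarith : 0 ≤ T - h), mul_nonneg (by linarith : (0:ℝ) ≤ 1 + h) hZD]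

lemma aux_step2 {c0 C0 h hm E E' Y U ZH ZD : ℝ} (hh0 : 0 < h) (hE : 0 ≤ E)
    (hZHZD : ZH ≤ ZD)
    (hy : E ≤ (1+h)*Y + (1+h)*U)
    (hs : Y + (1/4)*ZD ≤ (1+c0*h)*E' + C0*(hm*h)) :
    ZH ≤ 4*(E' - E) + 4*c0*h*E' + 4*h*E + 4*C0*(hm*h) + 4*U := by
  have key : (1+h) * ZH ≤ (1+h) * (4*(E' - E) + 4*c0*h*E' + 4*h*E + 4*C0*(hm*h) + 4*U) := by
    have hs4 := mul_le_mul_of_nonneg_left hs (by positivity : (0:ℝ) ≤ 4*(1+h))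
    have hZ2 := mul_le_mul_of_nonneg_left hZHZD (by positivity : (0:ℝ) ≤ 1+h)
    nlinarith [mul_nonneg hE (sq_nonneg h)]
  exact le_of_mul_le_mul_left key (by positivity)

lemma aux_gron_step {q E1 E S bj : ℝ} (hq0 : 0 ≤ q) (hbj : 0 ≤ bj)
    (hqk : (1:ℝ) ≤ q) {k : ℕ}
    (hrec : E1 ≤ q^k * S)
    (hstep : E ≤ q * E1 + bj) (hS : 0 ≤ S) :
    E ≤ q^(k+1) * (S + bj) := by
  have h1 : q * E1 ≤ q * (q^k * S) := mul_le_mul_of_nonneg_left hrec hq0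
  have h2 : bj ≤ q^(k+1) * bj := le_mul_of_one_le_left hbj (one_le_pow₀ hqk)
  have h3 : q^(k+1) = q^k * q := pow_succ q k
  nlinarith [h1, h2, hstep]

set_option maxHeartbeats 1000000 in
lemma core_lemma (c0 C0 μexp T : ℝ) (hc0 : 0 ≤ c0) (hC0 : 0 ≤ C0) (hμ : 0 < μexp) (hT : 0 < T)
    (N : ℕ) (hN : 1 ≤ N) (dR : ℝ) (hd : 1 ≤ dR)
    (e yh z zh u tZ : ℕ → ℝ)
    (he : ∀ i, 0 ≤ e i) (hyh : ∀ i, 0 ≤ yh i) (hz : ∀ i, 0 ≤ z i) (hzh : ∀ i, 0 ≤ zh i)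
    (hu : ∀ i, 0 ≤ u i) (htZ : ∀ i, 0 ≤ tZ i)
    (young : ∀ i < N, e i ≤ (1 + T/N) * yh i + (1 + T/N) * u i)
    (zdom : ∀ i < N, z i ≤ 2 * zh i + 2 * tZ i)
    (stab : ∀ i < N, yh i + (1/4) * zh i * dR * (T/N)
        ≤ (1 + c0*(T/N)) * e (i+1) + C0 * (T/N)^(μexp+1)) :
    ∀ i ≤ N, e i + ∑ j ∈ Finset.range N, z j * (T/N)
      ≤ myC c0 C0 T * e N
        + myC c0 C0 T * (∑ j ∈ Finset.range N, (u j + tZ j * (T/N)))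
        + myC c0 C0 T * (T/N)^μexp := by
  intro i hi
  have hN0 : (0:ℝ) < N := by exact_mod_cast Nat.lt_of_lt_of_le Nat.zero_lt_one hN
  have hN1 : (1:ℝ) ≤ N := by exact_mod_cast hN
  obtain ⟨h, hhdef⟩ : ∃ x : ℝ, x = T / N := ⟨_, rfl⟩
  rw [← hhdef] at young stab ⊢
  have hh0 : 0 < h := hhdef ▸ div_pos hT hN0
  have hhT : h ≤ T := by
    rw [hhdef]
    calc T / (N:ℝ) ≤ T / 1 := by gcongr
      _ = T := div_one T
  have hNh : (N:ℝ) * h = T := by rw [hhdef]; field_simp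
  have hμ1 : h ^ (μexp+1) = h ^ μexp * h := by rw [Real.rpow_add hh0, Real.rpow_one]
  have hm0 : 0 < h ^ μexp := Real.rpow_pos_of_pos hh0 _
  obtain ⟨hm, hmdef⟩ : ∃ x : ℝ, x = h ^ μexp := ⟨_, rfl⟩
  rw [← hmdef] at hm0 hμ1 ⊢
  rw [hμ1] at stab
  obtain ⟨A, hAdef⟩ : ∃ x : ℝ, x = 1 + c0 + c0*T := ⟨_, rfl⟩
  obtain ⟨q, hqdef⟩ : ∃ x : ℝ, x = 1 + A*h := ⟨_, rfl⟩
  have hq1 : (1:ℝ) ≤ q := by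
    rw [hqdef, hAdef]
    have : 0 ≤ (1+c0+c0*T)*h := by positivity
    linarith
  have hq0 : (0:ℝ) ≤ q := by linarith
  obtain ⟨b, hbj⟩ : ∃ b : ℕ → ℝ, ∀ j, b j = (1+T)*C0*(hm*h) + (1+T)*(u j) :=
    ⟨_, fun j => rfl⟩
  have hb : ∀ j, 0 ≤ b j := by
    intro j; rw [hbj]
    have := hu j
    have : 0 ≤ (1+T)*(u j) := mul_nonneg (by linarith) (hu j)
    have : 0 ≤ (1+T)*C0*(hm*h) := by positivity
    linarith
  -- one-step inequality
  have step : ∀ j < N, e j ≤ q * e (j+1) + b j := by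
    intro j hj
    rw [hbj, hqdef, hAdef]
    have hZD : 0 ≤ zh j * dR * h :=
      mul_nonneg (mul_nonneg (hzh j) (by linarith)) hh0.le
    have hs : yh j + (1/4)*(zh j * dR * h) ≤ (1 + c0*h) * e (j+1) + C0*(hm*h) := by
      have := stab j hj; linarith [this]
    exact aux_step hc0 hC0 hh0 hhT (he _) (hu _) hm0 hZD (young j hj) hs
  -- Gronwall
  have gron : ∀ k, ∀ j, j + k = N →
      e j ≤ q^k * (e N + ∑ m ∈ Finset.Ico j N, b m) := by
    intro k
    induction k with
    | zero =>
      intro j hj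
      have : j = N := by omega
      subst this
      simp
    | succ k ih =>
      intro j hj
      have hjN : j < N := by omega
      have hrec := ih (j+1) (by omega)
      have hS0 : 0 ≤ e N + ∑ m ∈ Finset.Ico (j+1) N, b m := by
        have : 0 ≤ ∑ m ∈ Finset.Ico (j+1) N, b m := Finset.sum_nonneg fun m _ => hb m
        linarith [he N]
      have := aux_gron_step hq0 (hb j) hq1 hrec (step j hjN) hS0
      rw [Finset.sum_eq_sum_Ico_succ_bot hjN]
      calc e j ≤ q^(k+1) * ((e N + ∑ m ∈ Finset.Ico (j+1) N, b m) + b j) := this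
        _ = q^(k+1) * (e N + (b j + ∑ m ∈ Finset.Ico (j+1) N, b m)) := by ring
  -- exponential bound
  obtain ⟨Eexp, hEdef⟩ : ∃ x : ℝ, x = Real.exp (A*T) := ⟨_, rfl⟩
  have hEpos : 0 < Eexp := hEdef ▸ Real.exp_pos _
  have hE1 : (1:ℝ) ≤ Eexp := by
    rw [hEdef]; exact Real.one_le_exp (by rw [hAdef]; positivity)
  have hqN : q^N ≤ Eexp := by
    have h1 : q ≤ Real.exp (A*h) := by
      have := Real.add_one_le_exp (A*h)
      rw [hqdef]; linarith
    calc q^N ≤ (Real.exp (A*h))^N := pow_le_pow_left₀ hq0 h1 N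
      _ = Real.exp ((N:ℝ)*(A*h)) := (Real.exp_nat_mul _ N).symm
      _ = Eexp := by rw [hEdef]; congr 1; rw [← hNh]; ring
  obtain ⟨SU, hSUdef⟩ : ∃ x : ℝ, x = ∑ j ∈ Finset.range N, u j := ⟨_, rfl⟩
  have hSU0 : 0 ≤ SU := hSUdef ▸ Finset.sum_nonneg fun m _ => hu m
  obtain ⟨B, hBdef⟩ : ∃ x : ℝ, x = ∑ j ∈ Finset.range N, b j := ⟨_, rfl⟩
  have hB0 : 0 ≤ B := hBdef ▸ Finset.sum_nonneg fun m _ => hb m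
  have hBval : B = (1+T)*C0*T*hm + (1+T)*SU := by
    rw [hBdef]
    have h1 : ∀ j ∈ Finset.range N, b j = (1+T)*C0*(hm*h) + (1+T)*(u j) := fun j _ => hbj j
    rw [Finset.sum_congr rfl h1, Finset.sum_add_distrib, Finset.sum_const, Finset.card_range,
      nsmul_eq_mul, ← Finset.mul_sum, ← hSUdef]
    linear_combination ((1+T)*C0*hm) * hNh
  obtain ⟨G, hGdef⟩ : ∃ x : ℝ, x = Eexp * (e N + B) := ⟨_, rfl⟩
  have hG0 : 0 ≤ G := by
    rw [hGdef]; exact mul_nonneg hEpos.le (by linarith [he N])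
  have Ebound : ∀ j ≤ N, e j ≤ G := by
    intro j hj
    have hg := gron (N - j) j (by omega)
    have hsub : ∑ m ∈ Finset.Ico j N, b m ≤ B := by
      rw [hBdef]
      apply Finset.sum_le_sum_of_subset_of_nonneg
      · intro x hx
        simp only [Finset.mem_Ico, Finset.mem_range] at *
        omega
      · intro m _ _; exact hb m
    have hq2 : q^(N-j) ≤ q^N := pow_le_pow_right₀ hq1 (Nat.sub_le N j)
    have hS0 : 0 ≤ e N + ∑ m ∈ Finset.Ico j N, b m := by
      have : 0 ≤ ∑ m ∈ Finset.Ico j N, b m := Finset.sum_nonneg fun m _ => hb m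
      linarith [he N]
    calc e j ≤ q^(N-j) * (e N + ∑ m ∈ Finset.Ico j N, b m) := hg
      _ ≤ Eexp * (e N + B) :=
          mul_le_mul (le_trans hq2 hqN) (by linarith) hS0 (by linarith)
      _ = G := hGdef.symm
  -- Z-part
  have step2 : ∀ j < N, zh j * h ≤ 4*(e (j+1) - e j) + 4*c0*h*(e (j+1)) + 4*h*(e j)
      + 4*C0*(hm*h) + 4*(u j) := by
    intro j hj
    have hZHZD : zh j * h ≤ (zh j * dR) * h :=
      mul_le_mul_of_nonneg_right (le_mul_of_one_le_right (hzh j) hd) hh0.le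
    have hs : yh j + (1/4)*((zh j * dR) * h) ≤ (1 + c0*h) * e (j+1) + C0*(hm*h) := by
      have := stab j hj; linarith [this]
    exact aux_step2 hh0 (he j) hZHZD (young j hj) hs
  have zhsum : ∑ j ∈ Finset.range N, zh j * h
      ≤ 4*(e N) + 4*(c0+1)*T*G + 4*C0*T*hm + 4*SU := by
    have h1 : ∑ j ∈ Finset.range N, zh j * h
        ≤ ∑ j ∈ Finset.range N, (4*(e (j+1) - e j) + 4*c0*h*(e (j+1)) + 4*h*(e j)
          + 4*C0*(hm*h) + 4*(u j)) :=
      Finset.sum_le_sum fun j hj => step2 j (Finset.mem_range.mp hj)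
    have htel : ∑ j ∈ Finset.range N, (e (j+1) - e j) = e N - e 0 := Finset.sum_range_sub e N
    have hsum1 : ∑ j ∈ Finset.range N, e (j+1) ≤ (N:ℝ) * G := by
      calc ∑ j ∈ Finset.range N, e (j+1) ≤ ∑ _j ∈ Finset.range N, G :=
            Finset.sum_le_sum fun j hj => Ebound (j+1) (Finset.mem_range.mp hj)
        _ = (N:ℝ) * G := by rw [Finset.sum_const, Finset.card_range, nsmul_eq_mul]
    have hsum2 : ∑ j ∈ Finset.range N, e j ≤ (N:ℝ) * G := by
      calc ∑ j ∈ Finset.range N, e j ≤ ∑ _j ∈ Finset.range N, G :=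
            Finset.sum_le_sum fun j hj => Ebound j (le_of_lt (Finset.mem_range.mp hj))
        _ = (N:ℝ) * G := by rw [Finset.sum_const, Finset.card_range, nsmul_eq_mul]
    have hexp : ∑ j ∈ Finset.range N, (4*(e (j+1) - e j) + 4*c0*h*(e (j+1)) + 4*h*(e j)
          + 4*C0*(hm*h) + 4*(u j))
        = 4*(e N - e 0) + 4*c0*h*(∑ j ∈ Finset.range N, e (j+1))
          + 4*h*(∑ j ∈ Finset.range N, e j) + 4*C0*(hm*h)*(N:ℝ) + 4*SU := by
      rw [Finset.sum_add_distrib, Finset.sum_add_distrib, Finset.sum_add_distrib,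
        Finset.sum_add_distrib, Finset.sum_const, Finset.card_range, nsmul_eq_mul,
        ← Finset.mul_sum, ← Finset.mul_sum, ← Finset.mul_sum, ← Finset.mul_sum, htel, ← hSUdef]
      ring
    rw [hexp] at h1
    have hcg : 4*c0*h*(∑ j ∈ Finset.range N, e (j+1)) ≤ 4*c0*(T*G) := by
      have h2 := mul_le_mul_of_nonneg_left hsum1 (by positivity : (0:ℝ) ≤ 4*c0*h)
      calc 4*c0*h*(∑ j ∈ Finset.range N, e (j+1)) ≤ 4*c0*h*((N:ℝ)*G) := h2
        _ = 4*c0*(((N:ℝ)*h)*G) := by ring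
        _ = 4*c0*(T*G) := by rw [hNh]
    have hcg2 : 4*h*(∑ j ∈ Finset.range N, e j) ≤ 4*(T*G) := by
      have h2 := mul_le_mul_of_nonneg_left hsum2 (by positivity : (0:ℝ) ≤ 4*h)
      calc 4*h*(∑ j ∈ Finset.range N, e j) ≤ 4*h*((N:ℝ)*G) := h2
        _ = 4*(((N:ℝ)*h)*G) := by ring
        _ = 4*(T*G) := by rw [hNh]
    have hCT : 4*C0*(hm*h)*(N:ℝ) = 4*C0*T*hm := by rw [← hNh]; ring
    rw [hCT] at h1
    linarith only [h1, hcg, hcg2, he 0]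
  obtain ⟨STZ, hSTZdef⟩ : ∃ x : ℝ, x = ∑ j ∈ Finset.range N, tZ j * h := ⟨_, rfl⟩
  have hSTZ0 : 0 ≤ STZ := hSTZdef ▸ Finset.sum_nonneg fun m _ => mul_nonneg (htZ m) hh0.le
  have zsum : ∑ j ∈ Finset.range N, z j * h
      ≤ 8*(e N) + 8*(c0+1)*T*G + 8*C0*T*hm + 8*SU + 2*STZ := by
    have h1 : ∑ j ∈ Finset.range N, z j * h
        ≤ ∑ j ∈ Finset.range N, (2*(zh j * h) + 2*(tZ j * h)) := by
      apply Finset.sum_le_sum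
      intro j hj
      have h2 := mul_le_mul_of_nonneg_right (zdom j (Finset.mem_range.mp hj)) hh0.le
      linarith only [h2]
    have h3 : ∑ j ∈ Finset.range N, (2*(zh j * h) + 2*(tZ j * h))
        = 2*(∑ j ∈ Finset.range N, zh j * h) + 2*STZ := by
      rw [Finset.sum_add_distrib, ← Finset.mul_sum, ← Finset.mul_sum, ← hSTZdef]
    rw [h3] at h1
    linarith only [h1, zhsum]
  obtain ⟨K, hKdef⟩ : ∃ x : ℝ, x = 1 + 8*(c0+1)*T := ⟨_, rfl⟩
  have hK1 : (1:ℝ) ≤ K := by rw [hKdef]; nlinarith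
  have hCval : myC c0 C0 T = K*Eexp*(1 + (1+T)*(1 + C0*T)) + 8 + 8*C0*T + 2 := by
    unfold myC
    rw [← hAdef, ← hEdef, ← hKdef]
  obtain ⟨C, hCdef⟩ : ∃ x : ℝ, x = myC c0 C0 T := ⟨_, rfl⟩
  rw [← hCdef]
  have heN := he N
  have hKG : G + 8*(c0+1)*T*G = K*Eexp*(e N) + K*Eexp*(1+T)*C0*T*hm + K*Eexp*(1+T)*SU := by
    rw [hGdef, hBval, hKdef]; ring
  have hKE : (0:ℝ) ≤ K*Eexp := mul_nonneg (by linarith) (by linarith)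
  have p1 : (0:ℝ) ≤ K*Eexp*(1+T) := mul_nonneg hKE (by linarith)
  have p2 : (0:ℝ) ≤ K*Eexp*(1+T)*(C0*T) := mul_nonneg p1 (by positivity)
  have p3 : (0:ℝ) ≤ C0*T := by positivity
  have c1 : K*Eexp + 8 ≤ C := by
    rw [hCdef, hCval]; nlinarith [hKE, p1, p2, p3]
  have c2 : K*Eexp*(1+T) + 8 ≤ C := by
    rw [hCdef, hCval]; nlinarith [hKE, p1, p2, p3]
  have c3 : K*Eexp*(1+T)*C0*T + 8*C0*T ≤ C := by
    rw [hCdef, hCval]; nlinarith [hKE, p1, p2, p3]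
  have c4 : (2:ℝ) ≤ C := by
    rw [hCdef, hCval]; nlinarith [hKE, p1, p2, p3]
  have hsplit : ∑ j ∈ Finset.range N, (u j + tZ j * h) = SU + STZ := by
    rw [Finset.sum_add_distrib, ← hSUdef, ← hSTZdef]
  rw [hsplit]
  have hEi := Ebound i hi
  have t1 := mul_le_mul_of_nonneg_right c1 heN
  have t2 := mul_le_mul_of_nonneg_right c2 hSU0
  have t3 := mul_le_mul_of_nonneg_right c3 hm0.le
  have t4 := mul_le_mul_of_nonneg_right c4 hSTZ0
  linarith only [t1, t2, t3, t4, zsum, hKG, hEi]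


/-- Fundamental Lemma: almost-stability of the scheme implies that the global error is
controlled by the terminal-condition error, the sum of the one-step errors, and the
total stability imperfection `C h^μ`. -/
theorem fundamental_lemma
    (n d : ℕ) (hd : 0 < d) (c0 C0 : ℝ) (hc0 : 0 ≤ c0) (hC0 : 0 ≤ C0)
    (μexp : ℝ) (hμexp : 0 < μexp) (T : ℝ) (hT : 0 < T) :
    ∃ C : ℝ, 0 ≤ C ∧
      ∀ (N : ℕ), 1 ≤ N →
      ∀ (Ω : Type) (mΩ : MeasurableSpace Ω) (P : Measure Ω),
        IsProbabilityMeasure P →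
      ∀ (Yt Y Yhat : ℕ → Ω → EuclideanSpace ℝ (Fin n))
        (Zbar Z Zhat : ℕ → Ω → EuclideanSpace ℝ (Fin n × Fin d))
        (ξ ξN : Ω → EuclideanSpace ℝ (Fin n)),
        (∀ i, MemLp (Yt i) 2 P) → (∀ i, MemLp (Y i) 2 P) → (∀ i, MemLp (Yhat i) 2 P) →
        (∀ i, MemLp (Zbar i) 2 P) → (∀ i, MemLp (Z i) 2 P) → (∀ i, MemLp (Zhat i) 2 P) →
        Yt N = ξ → Y N = ξN →
        -- almost-stability
        (∀ i < N,
          (∫ ω, ‖Yhat i ω - Y i ω‖ ^ 2 ∂P)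
            + (1 / 4) * (∫ ω, ‖Zhat i ω - Z i ω‖ ^ 2 ∂P) * d * (T / N)
          ≤ (1 + c0 * (T / N)) * (∫ ω, ‖Yt (i + 1) ω - Y (i + 1) ω‖ ^ 2 ∂P)
            + C0 * (T / N) ^ (μexp + 1)) →
        ∀ i ≤ N,
          (∫ ω, ‖Yt i ω - Y i ω‖ ^ 2 ∂P)
            + (∫ ω, ∑ j ∈ Finset.range N, ‖Zbar j ω - Z j ω‖ ^ 2 * (T / N) ∂P)
          ≤ C * (∫ ω, ‖ξ ω - ξN ω‖ ^ 2 ∂P)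
            + C * (∑ j ∈ Finset.range N,
                ((∫ ω, ‖Yt j ω - Yhat j ω‖ ^ 2 ∂P) / (T / N)
                  + (∫ ω, ‖Zbar j ω - Zhat j ω‖ ^ 2 ∂P) * (T / N)))
            + C * (T / N) ^ μexp := by
  refine ⟨myC c0 C0 T, ?_, ?_⟩
  · have e0 := (Real.exp_pos ((1+c0+c0*T)*T)).le
    have h1 : (0:ℝ) ≤ 1+8*(c0+1)*T := by
      nlinarith [mul_nonneg (by linarith : (0:ℝ) ≤ c0+1) hT.le]
    have h2 : (0:ℝ) ≤ 1+(1+T)*(1+C0*T) := by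
      nlinarith [mul_nonneg (by linarith : (0:ℝ) ≤ 1+T)
        (by nlinarith [mul_nonneg hC0 hT.le] : (0:ℝ) ≤ 1+C0*T)]
    have h3 : (0:ℝ) ≤ (1+8*(c0+1)*T)*Real.exp ((1+c0+c0*T)*T)*(1+(1+T)*(1+C0*T)) :=
      mul_nonneg (mul_nonneg h1 e0) h2
    unfold myC
    nlinarith [mul_nonneg hC0 hT.le]
  intro N hN Ω mΩ P _hP Yt Y Yhat Zbar Z Zhat ξ ξN hYt hY hYhat hZbar hZ hZhat hYtN hYN
    hstab i hi
  subst hYtN; subst hYN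
  have hN0 : (0:ℝ) < N := by exact_mod_cast Nat.lt_of_lt_of_le Nat.zero_lt_one hN
  have hh0 : 0 < T / (N:ℝ) := div_pos hT hN0
  have hd1 : (1:ℝ) ≤ (d:ℝ) := by exact_mod_cast hd
  have I1 : ∀ i, Integrable (fun ω => ‖Yt i ω - Y i ω‖^2) P :=
    fun i => sqInt ((hYt i).sub (hY i))
  have I2 : ∀ i, Integrable (fun ω => ‖Yhat i ω - Y i ω‖^2) P :=
    fun i => sqInt ((hYhat i).sub (hY i))
  have I3 : ∀ i, Integrable (fun ω => ‖Yt i ω - Yhat i ω‖^2) P :=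
    fun i => sqInt ((hYt i).sub (hYhat i))
  have I4 : ∀ i, Integrable (fun ω => ‖Zbar i ω - Z i ω‖^2) P :=
    fun i => sqInt ((hZbar i).sub (hZ i))
  have I5 : ∀ i, Integrable (fun ω => ‖Zhat i ω - Z i ω‖^2) P :=
    fun i => sqInt ((hZhat i).sub (hZ i))
  have I6 : ∀ i, Integrable (fun ω => ‖Zbar i ω - Zhat i ω‖^2) P :=
    fun i => sqInt ((hZbar i).sub (hZhat i))
  have hsum : (∫ ω, ∑ j ∈ Finset.range N, ‖Zbar j ω - Z j ω‖^2 * (T/N) ∂P)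
      = ∑ j ∈ Finset.range N, (∫ ω, ‖Zbar j ω - Z j ω‖^2 ∂P) * (T/N) := by
    rw [integral_finset_sum _ (fun j _ => (I4 j).mul_const _)]
    exact Finset.sum_congr rfl fun j _ => integral_mul_const _ _
  rw [hsum]
  have young : ∀ i < N,
      (∫ ω, ‖Yt i ω - Y i ω‖^2 ∂P)
        ≤ (1 + T/N) * (∫ ω, ‖Yhat i ω - Y i ω‖^2 ∂P)
          + (1 + T/N) * ((∫ ω, ‖Yt i ω - Yhat i ω‖^2 ∂P) / (T/N)) := by
    intro i _
    have pt : ∀ ω, ‖Yt i ω - Y i ω‖^2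
        ≤ (1+T/N)*‖Yhat i ω - Y i ω‖^2 + ((1+T/N)/(T/N))*‖Yt i ω - Yhat i ω‖^2 :=
      fun ω => young_pt (Yt i ω) (Yhat i ω) (Y i ω) hh0
    have hInt : Integrable (fun ω => (1+T/N)*‖Yhat i ω - Y i ω‖^2
        + ((1+T/N)/(T/N))*‖Yt i ω - Yhat i ω‖^2) P :=
      ((I2 i).const_mul _).add ((I3 i).const_mul _)
    have h1 := integral_mono (I1 i) hInt pt
    rw [integral_add ((I2 i).const_mul _) ((I3 i).const_mul _), integral_const_mul,
      integral_const_mul] at h1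
    have h2 : ((1+T/N)/(T/N))*(∫ ω, ‖Yt i ω - Yhat i ω‖^2 ∂P)
        = (1+T/N)*((∫ ω, ‖Yt i ω - Yhat i ω‖^2 ∂P)/(T/N)) := by ring
    linarith [h1, h2.le, h2.ge]
  have zdom : ∀ i < N,
      (∫ ω, ‖Zbar i ω - Z i ω‖^2 ∂P)
        ≤ 2 * (∫ ω, ‖Zhat i ω - Z i ω‖^2 ∂P) + 2 * (∫ ω, ‖Zbar i ω - Zhat i ω‖^2 ∂P) := by
    intro i _
    have pt : ∀ ω, ‖Zbar i ω - Z i ω‖^2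
        ≤ 2*‖Zhat i ω - Z i ω‖^2 + 2*‖Zbar i ω - Zhat i ω‖^2 :=
      fun ω => two_pt (Zbar i ω) (Zhat i ω) (Z i ω)
    have hInt : Integrable (fun ω => 2*‖Zhat i ω - Z i ω‖^2
        + 2*‖Zbar i ω - Zhat i ω‖^2) P :=
      ((I5 i).const_mul _).add ((I6 i).const_mul _)
    have h1 := integral_mono (I4 i) hInt pt
    rw [integral_add ((I5 i).const_mul _) ((I6 i).const_mul _), integral_const_mul,
      integral_const_mul] at h1
    exact h1
  exact core_lemma c0 C0 μexp T hc0 hC0 hμexp hT N hN (d:ℝ) hd1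
    (fun i => ∫ ω, ‖Yt i ω - Y i ω‖^2 ∂P)
    (fun i => ∫ ω, ‖Yhat i ω - Y i ω‖^2 ∂P)
    (fun i => ∫ ω, ‖Zbar i ω - Z i ω‖^2 ∂P)
    (fun i => ∫ ω, ‖Zhat i ω - Z i ω‖^2 ∂P)
    (fun i => (∫ ω, ‖Yt i ω - Yhat i ω‖^2 ∂P) / (T/N))
    (fun i => ∫ ω, ‖Zbar i ω - Zhat i ω‖^2 ∂P)
    (fun i => integral_nonneg fun ω => sq_nonneg _)
    (fun i => integral_nonneg fun ω => sq_nonneg _)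
    (fun i => integral_nonneg fun ω => sq_nonneg _)
    (fun i => integral_nonneg fun ω => sq_nonneg _)
    (fun i => div_nonneg (integral_nonneg fun ω => sq_nonneg _) hh0.le)
    (fun i => integral_nonneg fun ω => sq_nonneg _)
    young zdom hstab i hi
end

section
/- Preservation of positivity by the tamed explicit scheme (n = 1). Let Assumption (P) hold: n = 1, f^h satisfies |f^h(t,y',z) − f^h(t,y,z)| ≤ L^h_y|y'−y| and |f^h(t,y,z') − f^h(t,y,z)| ≤ L^h_z|z'−z|, and almost surely, for all i ∈ {0,…,N−1}, h(L^h_y + L^h_z|H_{i+1}| + (1−θ')h L^h_z|H_{i+1}| L^h_y) < 1. Let (Y_i, Z_i)_{i=0..N} be produced by the explicit scheme with driver f^h and terminal condition ξ^N ∈ L²(𝓕_N). If ξ^N ≥ 0 almost surely and f^h(t_i,0,0) ≥ 0 for all 0 ≤ i ≤ N−1, then Y_i ≥ 0 almost surely for all 0 ≤ i ≤ N. Moreover, if ξ^N > 0 almost surely and f^h(t_i,0,0) ≥ 0 for all i, then Y_i > 0 almost surely for all i. -/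
open MeasureTheory ProbabilityTheory

local notation "⟪" x ", " y "⟫" => @inner ℝ _ _ x y

/-- Conditional expectation of an a.e. strictly positive integrable function is a.e.
strictly positive. -/
lemma condexp_ae_pos {Ω : Type} {m mΩ : MeasurableSpace Ω} {μ : Measure Ω}
    [IsProbabilityMeasure μ] (hm : m ≤ mΩ)
    {f : Ω → ℝ} (hf : Integrable f μ) (hfpos : ∀ᵐ ω ∂μ, 0 < f ω) :
    ∀ᵐ ω ∂μ, 0 < (μ[f|m]) ω := by
  haveI : SigmaFinite (μ.trim hm) := inferInstance
  set W := μ[f|m] with hW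
  set A : Set Ω := W ⁻¹' Set.Iic 0 with hA
  have hAmm : MeasurableSet[m] A :=
    stronglyMeasurable_condExp.measurable measurableSet_Iic
  have hAm : MeasurableSet A := hm A hAmm
  have hA0 : μ A = 0 := by
    by_contra hA0
    have hApos : 0 < μ A := lt_of_le_of_ne (zero_le) (Ne.symm hA0)
    have h1 : ∫ ω in A, W ω ∂μ = ∫ ω in A, f ω ∂μ := setIntegral_condExp hm hf hAmm
    have h2 : ∫ ω in A, W ω ∂μ ≤ 0 := setIntegral_nonpos hAm (fun x hx => hx)
    have hnull : μ {ω | ¬ 0 < f ω} = 0 := hfpos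
    have hsupp : μ A ≤ μ (Function.support f ∩ A) := by
      have hd : μ (A \ Function.support f) = 0 := by
        refine measure_mono_null (fun ω hω => ?_) hnull
        simp only [Set.mem_diff, Function.mem_support, not_not] at hω
        simp [hω.2]
      calc μ A ≤ μ (A ∩ Function.support f) + μ (A \ Function.support f) :=
            measure_le_inter_add_diff μ A _
        _ = μ (Function.support f ∩ A) := by rw [hd, add_zero, Set.inter_comm]
    have h3 : 0 < ∫ ω in A, f ω ∂μ := by
      rw [setIntegral_pos_iff_support_of_nonneg_ae
        (ae_restrict_of_ae (hfpos.mono fun ω hω => hω.le)) hf.integrableOn]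
      exact lt_of_lt_of_le hApos hsupp
    linarith
  refine ae_iff.mpr ?_
  convert hA0 using 2
  ext ω
  simp [hA, not_lt]

/-- Conditional Jensen for the norm, inner-product space version. -/
lemma norm_condexp_le_condexp_norm {Ω : Type} {m mΩ : MeasurableSpace Ω} {μ : Measure Ω}
    [IsProbabilityMeasure μ] (hm : m ≤ mΩ)
    {E : Type} [NormedAddCommGroup E] [InnerProductSpace ℝ E] [CompleteSpace E]
    [TopologicalSpace.SeparableSpace E]
    {V : Ω → E} (hV : Integrable V μ) :
    ∀ᵐ ω ∂μ, ‖(μ[V|m]) ω‖ ≤ (μ[fun ω => ‖V ω‖|m]) ω := by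
  haveI : SigmaFinite (μ.trim hm) := inferInstance
  obtain ⟨D, hDc, hDd⟩ := TopologicalSpace.exists_countable_dense E
  have key : ∀ᵐ ω ∂μ, ∀ e ∈ D, ⟪e, (μ[V|m]) ω⟫ ≤ ‖e‖ * (μ[fun ω' => ‖V ω'‖|m]) ω := by
    rw [ae_ball_iff hDc]
    intro e _
    have h1 : (fun ω => ⟪e, (μ[V|m]) ω⟫) =ᵐ[μ] μ[fun ω => ⟪e, V ω⟫|m] := by
      refine ae_eq_condExp_of_forall_setIntegral_eq hm (hV.const_inner e) ?_ ?_ ?_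
      · intro s _ _
        exact (integrable_condExp.const_inner e).integrableOn
      · intro s hs _
        calc ∫ x in s, ⟪e, (μ[V|m]) x⟫ ∂μ = ⟪e, ∫ x in s, (μ[V|m]) x ∂μ⟫ :=
              integral_inner integrable_condExp.integrableOn e
          _ = ⟪e, ∫ x in s, V x ∂μ⟫ := by rw [setIntegral_condExp hm hV hs]
          _ = ∫ x in s, ⟪e, V x⟫ ∂μ := (integral_inner hV.integrableOn e).symm
      · exact StronglyMeasurable.aestronglyMeasurable
          ((continuous_const.inner continuous_id).comp_stronglyMeasurable
            stronglyMeasurable_condExp)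
    have h2 : μ[fun ω => ⟪e, V ω⟫|m] ≤ᵐ[μ] μ[fun ω => ‖e‖ * ‖V ω‖|m] :=
      condExp_mono (hV.const_inner e) (hV.norm.const_mul ‖e‖)
        (Filter.Eventually.of_forall fun ω => real_inner_le_norm e (V ω))
    have h3 : μ[fun ω => ‖e‖ * ‖V ω‖|m] =ᵐ[μ] fun ω => ‖e‖ * (μ[fun ω' => ‖V ω'‖|m]) ω :=
      condExp_smul (𝕜 := ℝ) ‖e‖ (fun ω => ‖V ω‖) m
    filter_upwards [h1, h2, h3] with ω hω1 hω2 hω3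
    calc ⟪e, (μ[V|m]) ω⟫ = (μ[fun ω' => ⟪e, V ω'⟫|m]) ω := hω1
      _ ≤ (μ[fun ω' => ‖e‖ * ‖V ω'‖|m]) ω := hω2
      _ = ‖e‖ * (μ[fun ω' => ‖V ω'‖|m]) ω := hω3
  have hnn : ∀ᵐ ω ∂μ, 0 ≤ (μ[fun ω' => ‖V ω'‖|m]) ω :=
    condExp_nonneg (Filter.Eventually.of_forall fun ω => norm_nonneg _)
  filter_upwards [key, hnn] with ω hω hWnn
  set z := (μ[V|m]) ω with hz
  set w := (μ[fun ω' => ‖V ω'‖|m]) ω with hw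
  have hall : ∀ e : E, ⟪e, z⟫ ≤ ‖e‖ * w := by
    have hcl : IsClosed {e : E | ⟪e, z⟫ ≤ ‖e‖ * w} :=
      isClosed_le (continuous_id.inner continuous_const)
        (continuous_norm.mul continuous_const)
    have hsub : closure D ⊆ {e : E | ⟪e, z⟫ ≤ ‖e‖ * w} :=
      hcl.closure_subset_iff.mpr (fun e he => hω e he)
    intro e
    exact hsub (by rw [hDd.closure_eq]; trivial)
  rcases eq_or_ne z 0 with h0 | h0
  · rw [h0, norm_zero]; exact hWnn
  · have hzz := hall z
    rw [real_inner_self_eq_norm_mul_norm] at hzz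
    exact le_of_mul_le_mul_left hzz (norm_pos_iff.mpr h0)

set_option maxHeartbeats 1000000 in
/-- Preservation of positivity by the tamed explicit scheme in dimension `n = 1`: under
Assumption (P), if `ξ^N ≥ 0` a.s. and `f^h(t_i,0,0) ≥ 0` for all `i`, then `Y_i ≥ 0` a.s.
for all `i`; if moreover `ξ^N > 0` a.s. then `Y_i > 0` a.s. for all `i`. -/
theorem preservation_of_positivity_explicit_scheme
    (d : ℕ) (hd : 0 < d) (T θ' : ℝ) (hT : 0 < T) (hθ'0 : 0 ≤ θ') (hθ'1 : θ' ≤ 1)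
    {Ω : Type} {mΩ : MeasurableSpace Ω} (μ : Measure Ω) [IsProbabilityMeasure μ]
    (N : ℕ) (hN : 0 < N) (h : ℝ) (hh : h = T / N)
    (𝓕 : ℕ → MeasurableSpace Ω) (h𝓕mono : Monotone 𝓕) (h𝓕 : ∀ i, 𝓕 i ≤ mΩ)
    (Λ : ℝ) (hΛ1 : 1 / 2 ≤ Λ) (hΛ2 : Λ ≤ 1)
    (H : ℕ → Ω → EuclideanSpace ℝ (Fin d))
    -- (AH)
    (hHL2 : ∀ i < N, MemLp (H (i + 1)) 2 μ)
    (hHindep : ∀ i < N, Indep (MeasurableSpace.comap (H (i + 1)) inferInstance) (𝓕 i) μ)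
    (hHmean : ∀ i < N, (μ[H (i + 1) | 𝓕 i]) =ᵐ[μ] 0)
    (hHcov : ∀ i < N, ∀ j k : Fin d,
      (μ[(fun ω => (H (i + 1) ω j * h) * (H (i + 1) ω k * h)) | 𝓕 i]) =ᵐ[μ]
        fun _ => Λ * h * (if j = k then 1 else 0))
    -- the driver, n = 1
    (fh : ℝ → ℝ → EuclideanSpace ℝ (Fin d) → ℝ)
    -- Assumption (P): regularity of f^h and smallness of the step
    (Ly Lz : ℝ) (hLy : 0 ≤ Ly) (hLz : 0 ≤ Lz)
    (hRegY : ∀ t ∈ Set.Icc (0:ℝ) T, ∀ (y y' : ℝ) (z : EuclideanSpace ℝ (Fin d)),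
      |fh t y' z - fh t y z| ≤ Ly * |y' - y|)
    (hRegZ : ∀ t ∈ Set.Icc (0:ℝ) T, ∀ (y : ℝ) (z z' : EuclideanSpace ℝ (Fin d)),
      |fh t y z' - fh t y z| ≤ Lz * ‖z' - z‖)
    (hP : ∀ᵐ ω ∂μ, ∀ i < N,
      h * (Ly + Lz * ‖H (i + 1) ω‖ + (1 - θ') * h * Lz * ‖H (i + 1) ω‖ * Ly) < 1)
    -- terminal condition
    (ξ : Ω → ℝ) (hξmeas : StronglyMeasurable[𝓕 N] ξ) (hξL2 : MemLp ξ 2 μ)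
    -- the scheme
    (Y : ℕ → Ω → ℝ) (Z : ℕ → Ω → EuclideanSpace ℝ (Fin d))
    (hYN : Y N = ξ)
    (hYL2 : ∀ i ≤ N, MemLp (Y i) 2 μ) (hZL2 : ∀ i < N, MemLp (Z i) 2 μ)
    (hZ : ∀ i < N, Z i = μ[(fun ω =>
      (Y (i + 1) ω + (1 - θ') * h * fh ((i : ℝ) * h) (Y (i + 1) ω) 0) • H (i + 1) ω) | 𝓕 i])
    (hY : ∀ i < N, Y i = μ[(fun ω =>
      Y (i + 1) ω + h * fh ((i : ℝ) * h) (Y (i + 1) ω) (Z i ω)) | 𝓕 i])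
    -- positivity of the driver at the origin
    (hf0 : ∀ i < N, 0 ≤ fh ((i : ℝ) * h) 0 0) :
    ((∀ᵐ ω ∂μ, 0 ≤ ξ ω) → ∀ i ≤ N, ∀ᵐ ω ∂μ, 0 ≤ Y i ω) ∧
    ((∀ᵐ ω ∂μ, 0 < ξ ω) → ∀ i ≤ N, ∀ᵐ ω ∂μ, 0 < Y i ω) := by
  have hNne : (N:ℝ) ≠ 0 := Nat.cast_ne_zero.mpr hN.ne'
  have hh0 : 0 < h := by
    rw [hh]
    exact div_pos hT (by exact_mod_cast hN)
  have hstep : ∀ i, i < N → (∀ᵐ ω ∂μ, 0 ≤ Y (i+1) ω) →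
      ((∀ᵐ ω ∂μ, 0 ≤ Y i ω) ∧ ((∀ᵐ ω ∂μ, 0 < Y (i+1) ω) → ∀ᵐ ω ∂μ, 0 < Y i ω)) := by
    intro i hi hpos
    have hmle : 𝓕 i ≤ mΩ := h𝓕 i
    haveI : SigmaFinite (μ.trim hmle) := inferInstance
    have hYi := hY i hi
    have hZi := hZ i hi
    have hf0i := hf0 i hi
    have ht : (i:ℝ) * h ∈ Set.Icc (0:ℝ) T := by
      constructor
      · exact mul_nonneg (Nat.cast_nonneg i) hh0.le
      · have h1 : (i:ℝ) ≤ (N:ℝ) := by exact_mod_cast hi.le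
        have h2 : (N:ℝ) * h = T := by rw [hh, mul_comm, div_mul_cancel₀ _ hNne]
        have := mul_le_mul_of_nonneg_right h1 hh0.le
        rw [h2] at this
        exact this
    set t := (i:ℝ) * h with htdef
    set Y1 := Y (i+1) with hY1def
    set Zi := Z i with hZidef
    set Hi := H (i+1) with hHidef
    -- basic L² and measurability facts
    have hY1L2 : MemLp Y1 2 μ := hYL2 (i+1) hi
    have hZiL2 : MemLp Zi 2 μ := hZL2 i hi
    have hHiL2 : MemLp Hi 2 μ := hHL2 i hi
    have hY1m := hY1L2.aestronglyMeasurable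
    have hZim := hZiL2.aestronglyMeasurable
    -- continuity of the driver in (y, z)
    have hcont : Continuous fun p : ℝ × EuclideanSpace ℝ (Fin d) => fh t p.1 p.2 := by
      have hlip : LipschitzWith ⟨Ly + Lz, by positivity⟩
          (fun p : ℝ × EuclideanSpace ℝ (Fin d) => fh t p.1 p.2) := by
        refine LipschitzWith.of_dist_le_mul ?_
        intro p q
        have h1 := hRegY t ht q.1 p.1 q.2
        have h2 := hRegZ t ht p.1 q.2 p.2
        have e1 : dist (fh t p.1 p.2) (fh t q.1 q.2) ≤
            |fh t p.1 p.2 - fh t p.1 q.2| + |fh t p.1 q.2 - fh t q.1 q.2| := by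
          rw [Real.dist_eq]
          exact abs_sub_le _ _ _
        have d1 : dist p.1 q.1 ≤ dist p q := by rw [Prod.dist_eq]; exact le_max_left _ _
        have d2 : dist p.2 q.2 ≤ dist p q := by rw [Prod.dist_eq]; exact le_max_right _ _
        have e2 : |p.1 - q.1| = dist p.1 q.1 := (Real.dist_eq _ _).symm
        have e3 : ‖p.2 - q.2‖ = dist p.2 q.2 := (dist_eq_norm _ _).symm
        show dist (fh t p.1 p.2) (fh t q.1 q.2) ≤ (Ly + Lz) * dist p q
        rw [e2] at h1
        rw [e3] at h2
        have b1 : Ly * dist p.1 q.1 ≤ Ly * dist p q := mul_le_mul_of_nonneg_left d1 hLy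
        have b2 : Lz * dist p.2 q.2 ≤ Lz * dist p q := mul_le_mul_of_nonneg_left d2 hLz
        linarith [h1, h2, e1, b1, b2]
      exact hlip.continuous
    have hfYZm : AEStronglyMeasurable (fun ω => fh t (Y1 ω) (Zi ω)) μ :=
      hcont.comp_aestronglyMeasurable (hY1m.prodMk hZim)
    have hfY0m : AEStronglyMeasurable (fun ω => fh t (Y1 ω) 0) μ :=
      hcont.comp_aestronglyMeasurable (hY1m.prodMk aestronglyMeasurable_const)
    -- growth bounds on the driver
    have hb1 : ∀ y : ℝ, |fh t y 0| ≤ |fh t 0 0| + Ly * |y| := by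
      intro y
      have h1 := hRegY t ht 0 y 0
      rw [sub_zero] at h1
      calc |fh t y 0| = |(fh t y 0 - fh t 0 0) + fh t 0 0| := by congr 1; ring
        _ ≤ |fh t y 0 - fh t 0 0| + |fh t 0 0| := abs_add_le _ _
        _ ≤ Ly * |y| + |fh t 0 0| := add_le_add_left h1 _
        _ = |fh t 0 0| + Ly * |y| := add_comm _ _
    have hb2 : ∀ (y : ℝ) (z : EuclideanSpace ℝ (Fin d)),
        |fh t y z| ≤ (|fh t 0 0| + Ly * |y|) + Lz * ‖z‖ := by
      intro y z
      have h1 := hRegZ t ht y 0 z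
      rw [sub_zero] at h1
      calc |fh t y z| = |(fh t y z - fh t y 0) + fh t y 0| := by congr 1; ring
        _ ≤ |fh t y z - fh t y 0| + |fh t y 0| := abs_add_le _ _
        _ ≤ Lz * ‖z‖ + (|fh t 0 0| + Ly * |y|) := add_le_add h1 (hb1 y)
        _ = (|fh t 0 0| + Ly * |y|) + Lz * ‖z‖ := add_comm _ _
    -- a MemLp comparison helper
    have memle : ∀ {u g : Ω → ℝ}, AEStronglyMeasurable u μ → MemLp g 2 μ →
        (∀ ω, |u ω| ≤ g ω) → MemLp u 2 μ := by
      intro u g hu hg hb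
      refine hg.of_le hu (Filter.Eventually.of_forall fun ω => ?_)
      rw [Real.norm_eq_abs, Real.norm_eq_abs]
      exact (hb ω).trans (le_abs_self _)
    have hfY0L2 : MemLp (fun ω => fh t (Y1 ω) 0) 2 μ :=
      memle hfY0m ((memLp_const |fh t 0 0|).add (hY1L2.norm.const_mul Ly))
        (fun ω => by simpa [Pi.add_apply, Real.norm_eq_abs] using hb1 (Y1 ω))
    have hfYZL2 : MemLp (fun ω => fh t (Y1 ω) (Zi ω)) 2 μ :=
      memle hfYZm (((memLp_const |fh t 0 0|).add (hY1L2.norm.const_mul Ly)).add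
          (hZiL2.norm.const_mul Lz))
        (fun ω => by simpa [Pi.add_apply, Real.norm_eq_abs] using hb2 (Y1 ω) (Zi ω))
    -- the integrand functions
    set W : Ω → ℝ := fun ω => Y1 ω + h * fh t (Y1 ω) (Zi ω) with hWdef
    set V : Ω → EuclideanSpace ℝ (Fin d) :=
      fun ω => (Y1 ω + (1 - θ') * h * fh t (Y1 ω) 0) • Hi ω with hVdef
    have hWL2 : MemLp W 2 μ := hY1L2.add (hfYZL2.const_mul h)
    have hWint : Integrable W μ := hWL2.integrable one_le_two
    have hGL2 : MemLp (fun ω => Y1 ω + (1 - θ') * h * fh t (Y1 ω) 0) 2 μ :=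
      hY1L2.add (hfY0L2.const_mul ((1 - θ') * h))
    have hVint : Integrable V μ := by
      rw [hVdef]
      exact memLp_one_iff_integrable.mp
        (hHiL2.smul hGL2)
    have hVnormint : Integrable (fun ω => ‖V ω‖) μ := hVint.norm
    set B : Ω → ℝ :=
      fun ω => ((1 + (1 - θ') * h * Ly) * Y1 ω + (1 - θ') * h * fh t 0 0) * ‖Hi ω‖ with hBdef
    have hBint : Integrable B μ := by
      rw [hBdef]
      exact memLp_one_iff_integrable.mp ((hHiL2.norm).smul
        ((hY1L2.const_mul _).add (memLp_const _)))
    set ψ : Ω → ℝ := fun ω => h * Lz * ‖Zi ω‖ with hψdef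
    set χ₁ : Ω → ℝ := fun ω => h * Lz * ‖V ω‖ with hχ₁def
    set χ₂ : Ω → ℝ := fun ω => h * Lz * B ω with hχ₂def
    set Φ₂ : Ω → ℝ := fun ω => (1 - h * Ly) * Y1 ω + h * fh t 0 0 with hΦ₂def
    have hψint : Integrable ψ μ := ((hZiL2.integrable one_le_two).norm).const_mul (h * Lz)
    have hχ₁int : Integrable χ₁ μ := hVnormint.const_mul _
    have hχ₂int : Integrable χ₂ μ := hBint.const_mul _
    have hΦ₂int : Integrable Φ₂ μ :=
      ((hY1L2.const_mul _).add (memLp_const _)).integrable one_le_two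
    have hZim' : StronglyMeasurable[𝓕 i] Zi := by
      rw [hZi]; exact stronglyMeasurable_condExp
    have hψm : StronglyMeasurable[𝓕 i] ψ := by
      rw [hψdef]
      exact (hZim'.norm).const_mul _
    -- Step 1 : W dominates Φ₂ - ψ a.e.
    have hWge : ∀ᵐ ω ∂μ, Φ₂ ω - ψ ω ≤ W ω := by
      filter_upwards [hpos] with ω hy
      have h1 := hRegZ t ht (Y1 ω) (Zi ω) 0
      rw [zero_sub, norm_neg] at h1
      have h2 := hRegY t ht 0 (Y1 ω) 0
      rw [sub_zero, abs_of_nonneg hy] at h2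
      have h2a := (abs_le.mp h2).1
      have e1 := (le_abs_self (fh t (Y1 ω) 0 - fh t (Y1 ω) (Zi ω))).trans h1
      have key : fh t 0 0 - Ly * Y1 ω - Lz * ‖Zi ω‖ ≤ fh t (Y1 ω) (Zi ω) := by linarith
      have keyh := mul_le_mul_of_nonneg_left key hh0.le
      simp only [hΦ₂def, hψdef, hWdef]
      linarith [keyh]
    have hstep2 : μ[Φ₂ - ψ|𝓕 i] ≤ᵐ[μ] μ[W|𝓕 i] :=
      condExp_mono (hΦ₂int.sub hψint) hWint
        (hWge.mono fun ω hω => by simpa [Pi.sub_apply] using hω)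
    have hstep3 : μ[Φ₂ - ψ|𝓕 i] =ᵐ[μ] μ[Φ₂|𝓕 i] - μ[ψ|𝓕 i] := condExp_sub hΦ₂int hψint (𝓕 i)
    have hψce : μ[ψ|𝓕 i] = ψ := condExp_of_stronglyMeasurable hmle hψm hψint
    -- Step 2 : bound on ‖Z i‖
    have hZnorm : ∀ᵐ ω ∂μ, ‖Zi ω‖ ≤ (μ[fun ω' => ‖V ω'‖|𝓕 i]) ω := by
      have hthis := norm_condexp_le_condexp_norm hmle hVint
      rw [← hZi] at hthis
      exact hthis
    have hstep4a : ψ ≤ᵐ[μ] μ[χ₁|𝓕 i] := by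
      have hsm := condExp_smul (𝕜 := ℝ) (μ := μ) (m := 𝓕 i) (h * Lz) (fun ω' => ‖V ω'‖)
      have hχeq : χ₁ = (h * Lz) • fun ω' => ‖V ω'‖ := by rw [hχ₁def]; rfl
      rw [hχeq]
      filter_upwards [hZnorm, hsm] with ω h1 h2
      simp only [hψdef]
      rw [h2, Pi.smul_apply, smul_eq_mul]
      exact mul_le_mul_of_nonneg_left h1 (mul_nonneg hh0.le hLz)
    have hmono2 : μ[χ₁|𝓕 i] ≤ᵐ[μ] μ[χ₂|𝓕 i] := by
      refine condExp_mono hχ₁int hχ₂int ?_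
      filter_upwards [hpos] with ω hy
      simp only [hχ₁def, hχ₂def, hBdef]
      have hVn : ‖V ω‖ = |Y1 ω + (1 - θ') * h * fh t (Y1 ω) 0| * ‖Hi ω‖ := by
        simp only [hVdef]
        rw [norm_smul, Real.norm_eq_abs]
      have hc1 : 0 ≤ (1 - θ') * h := mul_nonneg (by linarith) hh0.le
      have h2 := hb1 (Y1 ω)
      have h3 : |Y1 ω + (1 - θ') * h * fh t (Y1 ω) 0| ≤
          |Y1 ω| + (1 - θ') * h * |fh t (Y1 ω) 0| := by
        calc |Y1 ω + (1 - θ') * h * fh t (Y1 ω) 0| ≤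
            |Y1 ω| + |(1 - θ') * h * fh t (Y1 ω) 0| := abs_add_le _ _
          _ = |Y1 ω| + (1 - θ') * h * |fh t (Y1 ω) 0| := by
              rw [abs_mul, abs_of_nonneg hc1]
      have h6 : (1 - θ') * h * |fh t (Y1 ω) 0| ≤
          (1 - θ') * h * (|fh t 0 0| + Ly * |Y1 ω|) := mul_le_mul_of_nonneg_left h2 hc1
      have h5 : |fh t 0 0| = fh t 0 0 := abs_of_nonneg hf0i
      rw [abs_of_nonneg hy] at h3 h6
      rw [h5] at h6
      have hGb : |Y1 ω + (1 - θ') * h * fh t (Y1 ω) 0| ≤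
          (1 + (1 - θ') * h * Ly) * Y1 ω + (1 - θ') * h * fh t 0 0 := by linarith [h3, h6]
      rw [hVn]
      exact mul_le_mul_of_nonneg_left
        (mul_le_mul_of_nonneg_right hGb (norm_nonneg _)) (mul_nonneg hh0.le hLz)
    have hχ₂sub : μ[Φ₂ - χ₂|𝓕 i] =ᵐ[μ] μ[Φ₂|𝓕 i] - μ[χ₂|𝓕 i] := condExp_sub hΦ₂int hχ₂int (𝓕 i)
    -- assemble: Y i ≥ μ[Φ₂ - χ₂ | 𝓕 i]
    have hYig : ∀ᵐ ω ∂μ, (μ[Φ₂ - χ₂|𝓕 i]) ω ≤ Y i ω := by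
      filter_upwards [hstep2, hstep3, hstep4a, hmono2, hχ₂sub] with ω e2 e3 e4a e5 e6
      have hYieq : Y i ω = (μ[W|𝓕 i]) ω := by rw [hYi]
      rw [hYieq]
      have hψle : ψ ω ≤ (μ[χ₂|𝓕 i]) ω := le_trans e4a e5
      calc (μ[Φ₂ - χ₂|𝓕 i]) ω = (μ[Φ₂|𝓕 i]) ω - (μ[χ₂|𝓕 i]) ω := by rw [e6]; rfl
        _ ≤ (μ[Φ₂|𝓕 i]) ω - ψ ω := by linarith
        _ = (μ[Φ₂|𝓕 i]) ω - (μ[ψ|𝓕 i]) ω := by rw [hψce]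
        _ = (μ[Φ₂ - ψ|𝓕 i]) ω := by rw [e3]; rfl
        _ ≤ (μ[W|𝓕 i]) ω := e2
    -- pointwise lower bound for Φ₂ - χ₂
    have hkey : ∀ᵐ ω ∂μ,
        Y1 ω * (1 - h * (Ly + Lz * ‖Hi ω‖ + (1 - θ') * h * Lz * ‖Hi ω‖ * Ly)) ≤ (Φ₂ - χ₂) ω
        ∧ 0 < 1 - h * (Ly + Lz * ‖Hi ω‖ + (1 - θ') * h * Lz * ‖Hi ω‖ * Ly) := by
      filter_upwards [hP] with ω hPω
      have hPi := hPω i hi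
      rw [← hHidef] at hPi
      have ha : (0:ℝ) ≤ ‖Hi ω‖ := norm_nonneg _
      have hθ1' : (0:ℝ) ≤ 1 - θ' := by linarith
      have n1 : (0:ℝ) ≤ h * Ly := mul_nonneg hh0.le hLy
      have n2 : (0:ℝ) ≤ θ' * h * Lz * ‖Hi ω‖ :=
        mul_nonneg (mul_nonneg (mul_nonneg hθ'0 hh0.le) hLz) ha
      have n3 : (0:ℝ) ≤ (1 - θ') * h * Lz * ‖Hi ω‖ * Ly * h :=
        mul_nonneg (mul_nonneg (mul_nonneg (mul_nonneg (mul_nonneg hθ1' hh0.le) hLz) ha) hLy)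
          hh0.le
      have hbd : (1 - θ') * h * Lz * ‖Hi ω‖ ≤
          h * (Ly + Lz * ‖Hi ω‖ + (1 - θ') * h * Lz * ‖Hi ω‖ * Ly) := by linarith [n1, n2, n3]
      have h2 : 0 ≤ 1 - (1 - θ') * h * Lz * ‖Hi ω‖ := by linarith
      refine ⟨?_, by linarith⟩
      simp only [Pi.sub_apply, hΦ₂def, hχ₂def, hBdef]
      have hint : (0:ℝ) ≤ h * fh t 0 0 * (1 - (1 - θ') * h * Lz * ‖Hi ω‖) :=
        mul_nonneg (mul_nonneg hh0.le hf0i) h2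
      linarith [hint]
    obtain ⟨hΦint⟩ : Nonempty (Integrable (Φ₂ - χ₂) μ) := ⟨hΦ₂int.sub hχ₂int⟩
    constructor
    · have hΦnn : ∀ᵐ ω ∂μ, 0 ≤ (Φ₂ - χ₂) ω := by
        filter_upwards [hkey, hpos] with ω hk hy
        exact le_trans (mul_nonneg hy hk.2.le) hk.1
      have hce : (0:Ω → ℝ) ≤ᵐ[μ] μ[Φ₂ - χ₂|𝓕 i] :=
        condExp_nonneg (hΦnn.mono fun ω hω => hω)
      filter_upwards [hYig, hce] with ω h1 h2
      exact le_trans h2 h1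
    · intro hspos
      have hΦpos : ∀ᵐ ω ∂μ, 0 < (Φ₂ - χ₂) ω := by
        filter_upwards [hkey, hspos] with ω hk hy
        exact lt_of_lt_of_le (mul_pos hy hk.2) hk.1
      have hce := condexp_ae_pos hmle hΦint hΦpos
      filter_upwards [hYig, hce] with ω h1 h2
      exact lt_of_lt_of_le h2 h1
  -- backward induction
  have main : ∀ k i, i + k = N →
      ((∀ᵐ ω ∂μ, 0 ≤ ξ ω) → ∀ᵐ ω ∂μ, 0 ≤ Y i ω) ∧
      ((∀ᵐ ω ∂μ, 0 < ξ ω) → ∀ᵐ ω ∂μ, 0 < Y i ω) := by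
    intro k
    induction k with
    | zero =>
      intro i hik
      have hiN : i = N := by omega
      subst hiN
      rw [hYN]
      exact ⟨fun hξ' => hξ', fun hξ' => hξ'⟩
    | succ k ih =>
      intro i hik
      have hi : i < N := by omega
      obtain ⟨ih0, ih1⟩ := ih (i+1) (by omega)
      refine ⟨fun hξ0 => (hstep i hi (ih0 hξ0)).1, fun hξ1 => ?_⟩
      have hp := ih1 hξ1
      exact (hstep i hi (hp.mono fun ω hω => hω.le)).2 hp
  refine ⟨fun hξ0 i hi => (main (N - i) i (by omega)).1 hξ0,
    fun hξ1 i hi => (main (N - i) i (by omega)).2 hξ1⟩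
end

section
/- Inner taming by projection satisfies (TMonGr). Let f : [0,T] × ℝⁿ × ℝ^{n×d} → ℝⁿ satisfy the monotonicity condition (Mon) with constant M_y ∈ ℝ and the growth condition (Growth) with constants K_t, K_y, K_z ≥ 0. Let r > 0 and T^r be the Euclidean projection onto the closed ball of radius r centered at 0 in ℝⁿ, and set f^h(t,y,z) := f(t,T^r(y),z). Then for every α > 0 and all (t,y,z): ⟨y, f^h(t,y,z)⟩ ≤ (max(0,M_y) + α)|y|² + K_t²/(2α) + (K_z²/(2α))|z|². -/
open scoped InnerProductSpace

/-- Euclidean projection onto the closed ball of radius `r` centered at `0`. -/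
noncomputable def projBall {n : ℕ} (r : ℝ) (y : EuclideanSpace ℝ (Fin n)) :
    EuclideanSpace ℝ (Fin n) :=
  if ‖y‖ ≤ r then y else (r / ‖y‖) • y

/-- Inner taming by projection satisfies (TMonGr):
`⟨y, f(t,T^r(y),z)⟩ ≤ (max(0,M_y) + α)|y|² + K_t²/(2α) + (K_z²/(2α))|z|²`. -/
theorem inner_taming_satisfies_TMonGr
    {n d : ℕ} {T : ℝ} (hT : 0 < T)
    (f : ℝ → EuclideanSpace ℝ (Fin n) → EuclideanSpace ℝ (Fin n × Fin d) →
      EuclideanSpace ℝ (Fin n))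
    {m : ℕ} (hm : 1 ≤ m) {My Kt Ky Kz : ℝ}
    (hKt : 0 ≤ Kt) (hKy : 0 ≤ Ky) (hKz : 0 ≤ Kz)
    (hMon : ∀ t ∈ Set.Icc (0:ℝ) T, ∀ (y y' : EuclideanSpace ℝ (Fin n))
      (z : EuclideanSpace ℝ (Fin n × Fin d)),
      ⟪y' - y, f t y' z - f t y z⟫_ℝ ≤ My * ‖y' - y‖ ^ 2)
    (hGrowth : ∀ t ∈ Set.Icc (0:ℝ) T, ∀ (y : EuclideanSpace ℝ (Fin n))
      (z : EuclideanSpace ℝ (Fin n × Fin d)),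
      ‖f t y z‖ ≤ Kt + Ky * ‖y‖ ^ m + Kz * ‖z‖)
    {r : ℝ} (hr : 0 < r) :
    ∀ α : ℝ, 0 < α → ∀ t ∈ Set.Icc (0:ℝ) T, ∀ (y : EuclideanSpace ℝ (Fin n))
      (z : EuclideanSpace ℝ (Fin n × Fin d)),
      ⟪y, f t (projBall r y) z⟫_ℝ
        ≤ (max 0 My + α) * ‖y‖ ^ 2 + Kt ^ 2 / (2 * α) + Kz ^ 2 / (2 * α) * ‖z‖ ^ 2 := by
  intro α hα t ht y z
  set p := projBall r y with hp
  -- write y = c • p with c ≥ 1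
  obtain ⟨c, hc1, hyc⟩ : ∃ c : ℝ, 1 ≤ c ∧ y = c • p := by
    by_cases h : ‖y‖ ≤ r
    · exact ⟨1, le_refl 1, by simp [hp, projBall, h]⟩
    · push_neg at h
      have hy0 : (0:ℝ) < ‖y‖ := hr.trans h
      refine ⟨‖y‖ / r, ?_, ?_⟩
      · rw [le_div_iff₀ hr]; linarith
      · simp only [hp, projBall, if_neg (not_le.mpr h), smul_smul]
        rw [div_mul_div_comm, mul_comm, div_self (mul_pos hr hy0).ne', one_smul]
  have hc0 : (0:ℝ) < c := lt_of_lt_of_le one_pos hc1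
  have hcp : c * ‖p‖ = ‖y‖ := by
    rw [hyc, norm_smul, Real.norm_eq_abs, abs_of_pos hc0]
  have hPN : ‖p‖ ≤ ‖y‖ := by
    nlinarith [norm_nonneg p]
  -- growth at 0
  have hA : ‖f t 0 z‖ ≤ Kt + Kz * ‖z‖ := by
    have := hGrowth t ht 0 z
    have hz : ((0:ℝ) ^ m) = 0 := zero_pow (by omega)
    simpa [hz] using this
  -- monotonicity bound at p
  have hfp : ⟪p, f t p z⟫_ℝ ≤ My * ‖p‖ ^ 2 + ‖p‖ * ‖f t 0 z‖ := by
    have hmon := hMon t ht 0 p z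
    simp only [sub_zero, inner_sub_right] at hmon
    have hin : ⟪p, f t 0 z⟫_ℝ ≤ ‖p‖ * ‖f t 0 z‖ := real_inner_le_norm _ _
    linarith
  have hmain : ⟪y, f t p z⟫_ℝ ≤ c * (My * ‖p‖ ^ 2 + ‖p‖ * ‖f t 0 z‖) := by
    rw [hyc, real_inner_smul_left]
    exact mul_le_mul_of_nonneg_left hfp hc0.le
  have e1 : c * (My * ‖p‖ ^ 2 + ‖p‖ * ‖f t 0 z‖)
      = My * ((c * ‖p‖) * ‖p‖) + (c * ‖p‖) * ‖f t 0 z‖ := by ring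
  rw [hcp] at e1
  -- Young's inequality
  have young : ∀ a b : ℝ, a * b ≤ α / 2 * a ^ 2 + b ^ 2 / (2 * α) := by
    intro a b
    have key : α / 2 * a ^ 2 + b ^ 2 / (2 * α) - a * b = (α * a - b) ^ 2 / (2 * α) := by
      field_simp; ring
    nlinarith [div_nonneg (sq_nonneg (α * a - b)) (by linarith : (0:ℝ) ≤ 2 * α)]
  have y1 : ‖y‖ * Kt ≤ α / 2 * ‖y‖ ^ 2 + Kt ^ 2 / (2 * α) := young ‖y‖ Kt
  have y2 : ‖y‖ * (Kz * ‖z‖) ≤ α / 2 * ‖y‖ ^ 2 + Kz ^ 2 / (2 * α) * ‖z‖ ^ 2 := by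
    have := young ‖y‖ (Kz * ‖z‖)
    have e : (Kz * ‖z‖) ^ 2 / (2 * α) = Kz ^ 2 / (2 * α) * ‖z‖ ^ 2 := by ring
    linarith [e ▸ this]
  have sMy : My * (‖y‖ * ‖p‖) ≤ max 0 My * ‖y‖ ^ 2 := by
    have h1 : My * (‖y‖ * ‖p‖) ≤ max 0 My * (‖y‖ * ‖p‖) :=
      mul_le_mul_of_nonneg_right (le_max_right _ _) (by positivity)
    have h2 : max 0 My * (‖y‖ * ‖p‖) ≤ max 0 My * ‖y‖ ^ 2 := by
      apply mul_le_mul_of_nonneg_left _ (le_max_left _ _)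
      nlinarith [norm_nonneg y]
    linarith
  have sA : ‖y‖ * ‖f t 0 z‖ ≤ ‖y‖ * Kt + ‖y‖ * (Kz * ‖z‖) := by
    nlinarith [norm_nonneg y, mul_le_mul_of_nonneg_left hA (norm_nonneg y)]
  linarith [hmain, e1 ▸ hmain, sMy, sA, y1, y2]
end

section
/- Inner taming by projection satisfies (TMon) with an indicator remainder. Let f : [0,T] × ℝⁿ × ℝ^{n×d} → ℝⁿ satisfy the monotonicity condition (Mon) with constant M_y ∈ ℝ and the local Lipschitz condition (RegY) with constant L_y ≥ 0 and degree m ∈ ℕ*. Let r > 0, T^r the Euclidean projection onto the closed ball of radius r centered at 0 in ℝⁿ, and f^h(t,y,z) := f(t,T^r(y),z). Then there exists a constant C ≥ 0 depending only on L_y and m such that for all t, y, y', z: ⟨y'−y, f^h(t,y',z) − f^h(t,y,z)⟩ ≤ M_y|y'−y|² + C(1 + |y'|^{2m} + |y|^{2m}) · 1_{{|y'| > r or |y| > r}}. -/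
set_option maxHeartbeats 1000000


open scoped InnerProductSpace

lemma norm_projBall_le {n : ℕ} {r : ℝ} (hr : 0 < r) (y : EuclideanSpace ℝ (Fin n)) :
    ‖projBall r y‖ ≤ ‖y‖ := by
  unfold projBall
  split_ifs with h
  · exact le_refl _
  · push_neg at h
    have hy : (0:ℝ) < ‖y‖ := hr.trans h
    rw [norm_smul, Real.norm_eq_abs, abs_of_nonneg (div_nonneg hr.le hy.le),
      div_mul_cancel₀ _ hy.ne']
    exact h.le

lemma norm_sub_projBall_le {n : ℕ} {r : ℝ} (hr : 0 < r) (y : EuclideanSpace ℝ (Fin n)) :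
    ‖y - projBall r y‖ ≤ ‖y‖ := by
  unfold projBall
  split_ifs with h
  · simp
  · push_neg at h
    have hy : (0:ℝ) < ‖y‖ := hr.trans h
    have hc : r / ‖y‖ ≤ 1 := (div_le_one hy).2 h.le
    have hc0 : 0 ≤ r / ‖y‖ := div_nonneg hr.le hy.le
    have : y - (r / ‖y‖) • y = (1 - r / ‖y‖) • y := by
      rw [sub_smul, one_smul]
    rw [this, norm_smul, Real.norm_eq_abs, abs_of_nonneg (by linarith)]
    nlinarith [norm_nonneg y]

lemma max_pow_le {a b : ℝ} (ha : 0 ≤ a) (hb : 0 ≤ b) (k : ℕ) :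
    (max 1 (max a b)) ^ k ≤ 1 + a ^ k + b ^ k := by
  rcases max_choice (1:ℝ) (max a b) with h | h
  · rw [h, one_pow]; nlinarith [pow_nonneg ha k, pow_nonneg hb k]
  · rw [h]
    rcases max_choice a b with h' | h' <;> rw [h'] <;> nlinarith [pow_nonneg ha k, pow_nonneg hb k]

open Classical in
/-- Inner taming by projection satisfies (TMon) with an indicator remainder:
there is a constant `C` depending only on `L_y` and `m` such that
`⟨y'−y, f^h(t,y',z) − f^h(t,y,z)⟩ ≤ M_y|y'−y|² + C(1+|y'|^{2m}+|y|^{2m})·1_{|y'|>r or |y|>r}`. -/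
theorem inner_taming_satisfies_TMon
    {n d : ℕ} {T : ℝ} (hT : 0 < T) {m : ℕ} (hm : 1 ≤ m) {Ly My : ℝ} (hLy : 0 ≤ Ly) :
    ∃ C : ℝ, 0 ≤ C ∧
      ∀ (f : ℝ → EuclideanSpace ℝ (Fin n) → EuclideanSpace ℝ (Fin n × Fin d) →
          EuclideanSpace ℝ (Fin n)),
        (∀ t ∈ Set.Icc (0:ℝ) T, ∀ (y y' : EuclideanSpace ℝ (Fin n))
          (z : EuclideanSpace ℝ (Fin n × Fin d)),
          ⟪y' - y, f t y' z - f t y z⟫_ℝ ≤ My * ‖y' - y‖ ^ 2) →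
        (∀ t ∈ Set.Icc (0:ℝ) T, ∀ (y y' : EuclideanSpace ℝ (Fin n))
          (z : EuclideanSpace ℝ (Fin n × Fin d)),
          ‖f t y' z - f t y z‖ ≤ Ly * (1 + ‖y'‖ ^ (m - 1) + ‖y‖ ^ (m - 1)) * ‖y' - y‖) →
        ∀ r : ℝ, 0 < r →
        ∀ t ∈ Set.Icc (0:ℝ) T, ∀ (y y' : EuclideanSpace ℝ (Fin n))
          (z : EuclideanSpace ℝ (Fin n × Fin d)),
          ⟪y' - y, f t (projBall r y') z - f t (projBall r y) z⟫_ℝ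
            ≤ My * ‖y' - y‖ ^ 2
              + C * (1 + ‖y'‖ ^ (2 * m) + ‖y‖ ^ (2 * m))
                  * (if r < ‖y'‖ ∨ r < ‖y‖ then (1:ℝ) else 0) := by
  refine ⟨8 * |My| + 12 * Ly, by positivity, ?_⟩
  intro f hMon hReg r hr t ht y y' z
  by_cases hcond : r < ‖y'‖ ∨ r < ‖y‖
  · rw [if_pos hcond, mul_one]
    set p := projBall r y with hp
    set p' := projBall r y' with hp'
    set D := f t p' z - f t p z with hD
    set M := max 1 (max ‖y'‖ ‖y‖) with hM
    have hM1 : (1:ℝ) ≤ M := le_max_left _ _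
    have hM0 : (0:ℝ) ≤ M := by linarith
    have ha : ‖y'‖ ≤ M := le_max_of_le_right (le_max_left _ _)
    have hb : ‖y‖ ≤ M := le_max_of_le_right (le_max_right _ _)
    have hpn : ‖p‖ ≤ M := (norm_projBall_le hr y).trans hb
    have hpn' : ‖p'‖ ≤ M := (norm_projBall_le hr y').trans ha
    have hyp : ‖y - p‖ ≤ M := (norm_sub_projBall_le hr y).trans hb
    have hyp' : ‖y' - p'‖ ≤ M := (norm_sub_projBall_le hr y').trans ha
    have hP : ‖p' - p‖ ≤ 2 * M := by
      have := norm_sub_le p' p; linarith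
    have hN : ‖y' - y‖ ≤ 2 * M := by
      have := norm_sub_le y' y; linarith
    have hA : ‖(y' - p') - (y - p)‖ ≤ 2 * M := by
      have := norm_sub_le (y' - p') (y - p); linarith
    -- decompose
    have hdec : (y' - y : EuclideanSpace ℝ (Fin n)) = (p' - p) + ((y' - p') - (y - p)) := by
      abel
    have hsplit : ⟪y' - y, D⟫_ℝ = ⟪p' - p, D⟫_ℝ + ⟪(y' - p') - (y - p), D⟫_ℝ := by
      rw [hdec, inner_add_left]
    have h1 : ⟪p' - p, D⟫_ℝ ≤ My * ‖p' - p‖ ^ 2 := hMon t ht p p' z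
    have h2 : ⟪(y' - p') - (y - p), D⟫_ℝ ≤ ‖(y' - p') - (y - p)‖ * ‖D‖ :=
      real_inner_le_norm _ _
    have h3 : ‖D‖ ≤ Ly * (1 + ‖p'‖ ^ (m - 1) + ‖p‖ ^ (m - 1)) * ‖p' - p‖ := hReg t ht p p' z
    -- pow bounds
    have hMpow1 : M ^ (m - 1) ≤ M ^ (2 * m) := pow_le_pow_right₀ hM1 (by omega)
    have h1M : (1:ℝ) ≤ M ^ (m - 1) := one_le_pow₀ hM1
    have hpm : ‖p‖ ^ (m - 1) ≤ M ^ (m - 1) := pow_le_pow_left₀ (norm_nonneg _) hpn _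
    have hpm' : ‖p'‖ ^ (m - 1) ≤ M ^ (m - 1) := pow_le_pow_left₀ (norm_nonneg _) hpn' _
    have hQ : 1 + ‖p'‖ ^ (m - 1) + ‖p‖ ^ (m - 1) ≤ 3 * M ^ (m - 1) := by linarith
    have hMm1 : M ^ (m - 1) * M * M = M ^ (m + 1) := by
      rw [← pow_succ, ← pow_succ]
      congr 1
      omega
    have hMp2 : M ^ (m + 1) ≤ M ^ (2 * m) := pow_le_pow_right₀ hM1 (by omega)
    have hM2 : M ^ 2 ≤ M ^ (2 * m) := pow_le_pow_right₀ hM1 (by omega)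
    have hS : M ^ (2 * m) ≤ 1 + ‖y'‖ ^ (2 * m) + ‖y‖ ^ (2 * m) :=
      max_pow_le (norm_nonneg _) (norm_nonneg _) _
    -- bound the second inner product
    have hD0 : (0:ℝ) ≤ ‖D‖ := norm_nonneg _
    have hA0 : (0:ℝ) ≤ ‖(y' - p') - (y - p)‖ := norm_nonneg _
    have hP0 : (0:ℝ) ≤ ‖p' - p‖ := norm_nonneg _
    have h4 : ‖(y' - p') - (y - p)‖ * ‖D‖ ≤ 2 * M * (Ly * (3 * M ^ (m - 1)) * (2 * M)) := by
      have hD' : ‖D‖ ≤ Ly * (3 * M ^ (m - 1)) * (2 * M) := by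
        calc ‖D‖ ≤ Ly * (1 + ‖p'‖ ^ (m - 1) + ‖p‖ ^ (m - 1)) * ‖p' - p‖ := h3
          _ ≤ Ly * (3 * M ^ (m - 1)) * (2 * M) := by
            apply mul_le_mul (by apply mul_le_mul le_rfl hQ (by positivity) hLy) hP hP0
            positivity
      calc ‖(y' - p') - (y - p)‖ * ‖D‖ ≤ (2 * M) * ‖D‖ := by
            apply mul_le_mul_of_nonneg_right hA hD0
        _ ≤ 2 * M * (Ly * (3 * M ^ (m - 1)) * (2 * M)) := by
            apply mul_le_mul_of_nonneg_left hD' (by positivity)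
    have h4' : 2 * M * (Ly * (3 * M ^ (m - 1)) * (2 * M)) = 12 * Ly * M ^ (m + 1) := by
      rw [← hMm1]; ring
    -- bound the monotone part
    have h5 : My * ‖p' - p‖ ^ 2 ≤ My * ‖y' - y‖ ^ 2 + 8 * |My| * M ^ 2 := by
      have hMy1 : My ≤ |My| := le_abs_self My
      have hMy2 : -|My| ≤ My := neg_abs_le My
      have hP2 : ‖p' - p‖ ^ 2 ≤ 4 * M ^ 2 := by nlinarith
      have hN2 : ‖y' - y‖ ^ 2 ≤ 4 * M ^ 2 := by nlinarith [norm_nonneg (y' - y)]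
      have e1 := mul_le_mul_of_nonneg_right hMy1 (sq_nonneg ‖p' - p‖)
      have e2 := mul_le_mul_of_nonneg_left hP2 (abs_nonneg My)
      have e3 := mul_le_mul_of_nonneg_right hMy2 (sq_nonneg ‖y' - y‖)
      have e4 := mul_le_mul_of_nonneg_left hN2 (abs_nonneg My)
      nlinarith [e1, e2, e3, e4]
    -- combine
    have key : ⟪y' - y, D⟫_ℝ ≤ My * ‖y' - y‖ ^ 2 + (8 * |My| + 12 * Ly) * M ^ (2 * m) := by
      rw [hsplit]
      have := h2.trans h4
      rw [h4'] at this
      have e5 := mul_le_mul_of_nonneg_left hMp2 (by positivity : (0:ℝ) ≤ 12 * Ly)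
      have e6 := mul_le_mul_of_nonneg_left hM2 (by positivity : (0:ℝ) ≤ 8 * |My|)
      linarith
    calc ⟪y' - y, D⟫_ℝ ≤ My * ‖y' - y‖ ^ 2 + (8 * |My| + 12 * Ly) * M ^ (2 * m) := key
      _ ≤ My * ‖y' - y‖ ^ 2 + (8 * |My| + 12 * Ly) * (1 + ‖y'‖ ^ (2 * m) + ‖y‖ ^ (2 * m)) := by
          have := mul_le_mul_of_nonneg_left hS (by positivity : (0:ℝ) ≤ 8 * |My| + 12 * Ly)
          linarith
  · rw [if_neg hcond, mul_zero, add_zero]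
    push_neg at hcond
    have h1 : projBall r y' = y' := by simp [projBall, hcond.1]
    have h2 : projBall r y = y := by simp [projBall, hcond.2]
    rw [h1, h2]
    exact hMon t ht y y' z
end
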